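/- arXiv:1906.09659 — 7 statements merged into one kernel-verified Lean document; each statement's English description precedes it below -/
import Mathlib

section
/- Let k be a positive integer and π a permutation of {1,...,k}. There exists a constant C'' = C''(π) such that for all integers n and a with n ≤ a ≤ n², there exists an n×n 0-1 matrix M containing at least a ones but containing at most C''·a^(2k-1)/n^(2k-2) copies of A_π. (That is, the supersaturation lower bound of C'·a^(2k-1)/n^(2k-2) copies is sharp to within a constant factor depending on π.) -/
/-- The number of copies of the `k × k` permutation matrix `A_π` in the `n × n`
0-1 matrix `M`: pairs of strictly increasing row/column index tuples such that
`M` has a one at `(x i, y (π i))` for every `i`. -/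
noncomputable def matCopies {k n : ℕ} (π : Equiv.Perm (Fin k))
    (M : Fin n → Fin n → Bool) : ℕ :=
  Nat.card {xy : (Fin k → Fin n) × (Fin k → Fin n) //
    StrictMono xy.1 ∧ StrictMono xy.2 ∧ ∀ i, M (xy.1 i) (xy.2 (π i)) = true}

/-- The number of ones in a 0-1 matrix. -/
noncomputable def matOnes {n : ℕ} (M : Fin n → Fin n → Bool) : ℕ :=
  Nat.card {ij : Fin n × Fin n // M ij.1 ij.2 = true}

/-!
Take the band of width `w ≈ a / n` around the diagonal, which has at least `a` ones. Either the
inversion graph of `π` or its complement is connected, and reversing the column order swaps the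
two (and the band with the anti-diagonal band), so we may assume the inversion graph connected.
Along an inversion `i < j` of a copy in the band, `x j ≤ x i + 2w`; by connectivity every row and
column of the copy lies within `O(k w)` of its first row. So a copy is fixed by its first row and
`2k - 1` offsets of size `O(k w)`, giving `n · O(k a / n)^(2k-1)` copies.
-/

open Function SimpleGraph

theorem SimpleGraph.Preconnected.le_add_mul_card_sub_one {V : Type*} [Fintype V]
    {G : SimpleGraph V} (hG : G.Preconnected) {f : V → ℕ} {c : ℕ}
    (hf : ∀ u v, G.Adj u v → f v ≤ f u + c) (u v : V) :
    f v ≤ f u + c * (Fintype.card V - 1) := by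
  have along_walk : ∀ {u v : V} (p : G.Walk u v), f v ≤ f u + c * p.length := by
    intro u v p
    induction p with
    | nil => simp
    | cons h _ ih => rw [Walk.length_cons, mul_add_one]; linarith [hf _ _ h]
  classical
  obtain ⟨p, hp⟩ := (hG u v).some.toPath
  have : p.length ≤ Fintype.card V - 1 := Nat.le_sub_one_of_lt hp.length_lt
  exact (along_walk p).trans (by gcongr)

def inversionGraph {α : Type*} [LinearOrder α] (π : Equiv.Perm α) : SimpleGraph α :=
  SimpleGraph.fromRel fun i j => i < j ∧ π j < π i

theorem inversionGraph_trans_revPerm {k : ℕ} (π : Equiv.Perm (Fin k)) :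
    inversionGraph (π.trans Fin.revPerm) = (inversionGraph π)ᶜ := by
  ext i j
  simp only [inversionGraph, fromRel_adj, compl_adj, Equiv.trans_apply, Fin.revPerm_apply,
    Fin.rev_lt_rev]
  rcases eq_or_ne i j with rfl | hij
  · simp
  have hπ : π i ≠ π j := π.injective.ne hij
  rcases hij.lt_or_gt with h | h <;> rcases hπ.lt_or_gt with h' | h' <;>
    simp [hij, h, h', h.not_gt, h'.not_gt]

def bandMatrix (n w : ℕ) : Fin n → Fin n → Bool :=
  fun i j => decide ((i : ℕ) ≤ j + w ∧ (j : ℕ) ≤ i + w)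

theorem mul_le_matOnes_bandMatrix {n v w : ℕ} (hvn : v ≤ n) (hvw : v ≤ w) :
    n * v ≤ matOnes (bandMatrix n w) := by
  let col (i : Fin n) (c : Fin v) : Fin n :=
    if h : (i : ℕ) + v < n then ⟨i + 1 + c, by omega⟩ else ⟨n - v + c, by omega⟩
  have col_val (i : Fin n) (c : Fin v) :
      (col i c : ℕ) = if (i : ℕ) + v < n then (i : ℕ) + 1 + c else n - v + c := by
    simp only [col]; split_ifs <;> rfl
  let toOne (p : Fin n × Fin v) : {ij : Fin n × Fin n // bandMatrix n w ij.1 ij.2 = true} :=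
    ⟨(p.1, col p.1 p.2), by
      have := col_val p.1 p.2
      simp only [bandMatrix, decide_eq_true_eq]
      split_ifs at this <;> omega⟩
  have : Injective toOne := by
    rintro ⟨i, c⟩ ⟨i', c'⟩ h
    simp only [toOne, Subtype.mk.injEq, Prod.mk.injEq] at h
    obtain ⟨rfl, h⟩ := h
    have := congrArg Fin.val h
    rw [col_val, col_val] at this
    refine Prod.ext rfl (Fin.ext ?_)
    dsimp only
    split_ifs at this <;> omega
  simpa [matOnes] using Nat.card_le_card_of_injective toOne this

theorem matOnes_comp_rev {n : ℕ} (M : Fin n → Fin n → Bool) :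
    matOnes (fun i j => M i j.rev) = matOnes M :=
  Nat.card_congr <| (Equiv.prodCongr (Equiv.refl _) Fin.revPerm).subtypeEquiv fun _ => Iff.rfl

theorem strictMono_rev_comp_rev_iff {k n : ℕ} {y : Fin k → Fin n} :
    StrictMono (Fin.rev ∘ y ∘ Fin.rev) ↔ StrictMono y := by
  have h_rev {y : Fin k → Fin n} (h : StrictMono y) :
      StrictMono (Fin.rev ∘ y ∘ Fin.rev) :=
    Fin.rev_strictAnti.comp (h.comp_strictAnti Fin.rev_strictAnti)
  exact ⟨fun h => by simpa [Function.comp_def] using h_rev h, h_rev⟩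

theorem matCopies_comp_rev {k n : ℕ} (π : Equiv.Perm (Fin k)) (M : Fin n → Fin n → Bool) :
    matCopies π (fun i j => M i j.rev) = matCopies (π.trans Fin.revPerm) M := by
  refine Nat.card_congr <|
    (Equiv.prodCongr (Equiv.refl _) (Fin.revPerm.arrowCongr Fin.revPerm)).subtypeEquiv ?_
  rintro ⟨x, y⟩
  have : Fin.revPerm.arrowCongr Fin.revPerm y = Fin.rev ∘ y ∘ Fin.rev := rfl
  simp [this, strictMono_rev_comp_rev_iff]

/-- Such a pair is determined by `x 0` and `2m + 1` offsets in `[0, D)`. -/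
theorem card_le_of_forall_mem_window {m n w D : ℕ}
    (P : (Fin (m + 1) → Fin n) × (Fin (m + 1) → Fin n) → Prop)
    (hP : ∀ xy, P xy → ∀ i, (xy.1 0 : ℕ) ≤ xy.1 i ∧ (xy.1 i : ℕ) < xy.1 0 + D ∧
      (xy.1 0 : ℕ) ≤ xy.2 i + w ∧ (xy.2 i : ℕ) + w < xy.1 0 + D) :
    Nat.card {xy // P xy} ≤ n * D ^ (2 * m + 1) := by
  let code (xy : {xy // P xy}) : Fin n × (Fin m → Fin D) × (Fin (m + 1) → Fin D) :=
    (xy.1.1 0,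
      fun i => ⟨xy.1.1 i.succ - xy.1.1 0, by have := hP _ xy.2 i.succ; omega⟩,
      fun j => ⟨xy.1.2 j + w - xy.1.1 0, by have := hP _ xy.2 j; omega⟩)
  have : Injective code := by
    rintro ⟨⟨x, y⟩, hxy⟩ ⟨⟨x', y'⟩, hxy'⟩ h
    simp only [code, Prod.mk.injEq, funext_iff, Fin.ext_iff] at h
    obtain ⟨h0, hx, hy⟩ := h
    have hw := hP (x, y) hxy
    have hw' := hP (x', y') hxy'
    dsimp only at hw hw'
    have hx_eq : x = x' := by
      ext i
      induction i using Fin.cases with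
      | zero => exact h0
      | succ i => have := hw i.succ; have := hw' i.succ; have := hx i; omega
    have hy_eq : y = y' := by
      ext j
      have := hw j; have := hw' j; have := hy j; omega
    simp [hx_eq, hy_eq]
  calc Nat.card {xy // P xy}
      ≤ Nat.card (Fin n × (Fin m → Fin D) × (Fin (m + 1) → Fin D)) :=
        Nat.card_le_card_of_injective code this
    _ = n * D ^ (2 * m + 1) := by
      simp only [Nat.card_eq_fintype_card, Fintype.card_prod, Fintype.card_fun, Fintype.card_fin]
      ring

theorem matCopies_bandMatrix_le {m : ℕ} {π : Equiv.Perm (Fin (m + 1))}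
    (hπ : (inversionGraph π).Preconnected) (n w : ℕ) :
    matCopies π (bandMatrix n w) ≤ n * (2 * w * (m + 1) + 1) ^ (2 * m + 1) := by
  refine card_le_of_forall_mem_window (w := w) _ fun ⟨x, y⟩ ⟨hx, hy, hM⟩ => ?_
  dsimp only at hx hy
  simp only [bandMatrix, decide_eq_true_eq] at hM
  -- an inversion `i < j`, `π j < π i` gives `x j ≤ y (π j) + w < y (π i) + w ≤ x i + 2w`
  have near_first : ∀ i, (x i : ℕ) ≤ x 0 + 2 * w * m := by
    intro i
    have := hπ.le_add_mul_card_sub_one (f := fun i => (x i : ℕ)) (c := 2 * w) ?_ 0 i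
    · simpa using this
    rintro u v ⟨-, ⟨-, hπuv⟩ | ⟨hvu, -⟩⟩
    · have := hy hπuv; have := hM u; have := hM v; omega
    · have := hx hvu; omega
  intro j
  have := hM (π.symm j)
  have := near_first j
  have := near_first (π.symm j)
  have := hx.monotone (Fin.zero_le j)
  have := hx.monotone (Fin.zero_le (π.symm j))
  simp only [Equiv.apply_symm_apply] at *
  have : 2 * w * (m + 1) = 2 * w * m + 2 * w := by ring
  refine ⟨?_, ?_, ?_, ?_⟩ <;> omega

theorem exists_matOnes_eq_bandMatrix_and_matCopies_le {m : ℕ} (π : Equiv.Perm (Fin (m + 1)))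
    (n w : ℕ) : ∃ M : Fin n → Fin n → Bool, matOnes M = matOnes (bandMatrix n w) ∧
      matCopies π M ≤ n * (2 * w * (m + 1) + 1) ^ (2 * m + 1) := by
  rcases (inversionGraph π).connected_or_preconnected_compl with h | h
  · exact ⟨_, rfl, matCopies_bandMatrix_le h.preconnected n w⟩
  · refine ⟨fun i j => bandMatrix n w i j.rev, matOnes_comp_rev _, ?_⟩
    rw [matCopies_comp_rev]
    exact matCopies_bandMatrix_le (by rwa [inversionGraph_trans_revPerm]) n w

theorem cast_le_pow_mul_pow_div_pow {c n D K a e : ℕ} (hc : c ≤ n * D ^ (e + 1))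
    (hnD : n * D ≤ K * a) : (c : ℝ) ≤ (K : ℝ) ^ (e + 1) * (a : ℝ) ^ (e + 1) / (n : ℝ) ^ e := by
  rcases Nat.eq_zero_or_pos n with rfl | hn
  · obtain rfl : c = 0 := by simpa using hc
    rw [Nat.cast_zero]
    positivity
  have : c * n ^ e ≤ (K * a) ^ (e + 1) :=
    calc c * n ^ e ≤ n * D ^ (e + 1) * n ^ e := Nat.mul_le_mul_right _ hc
      _ = (n * D) ^ (e + 1) := by ring
      _ ≤ (K * a) ^ (e + 1) := Nat.pow_le_pow_left hnD _
  rw [le_div_iff₀ (by positivity), ← mul_pow]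
  exact_mod_cast this

theorem matCopies_le_one_of_fin_zero (π : Equiv.Perm (Fin 0)) {n : ℕ} (M : Fin n → Fin n → Bool) :
    matCopies π M ≤ 1 :=
  Finite.card_le_one_iff_subsingleton.mpr inferInstance

theorem supersaturation_01_matrices_sharp_general (k : ℕ) (π : Equiv.Perm (Fin k)) :
    ∃ C'' : ℝ, ∀ n a : ℕ, n ≤ a → (a : ℝ) ≤ (n : ℝ) ^ 2 →
      ∃ M : Fin n → Fin n → Bool,
        a ≤ matOnes M ∧
        (matCopies π M : ℝ) ≤ C'' * (a : ℝ) ^ (2 * k - 1) / (n : ℝ) ^ (2 * k - 2) := by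
  refine ⟨((4 * k + 1 : ℕ) : ℝ) ^ (2 * k - 1), fun n a han ha => ?_⟩
  replace ha : a ≤ n * n := by exact_mod_cast sq (n : ℝ) ▸ ha
  set w := a / n + 1
  have hnw : n * w ≤ 2 * a := by
    have := Nat.mul_div_le a n
    rw [mul_add_one]; omega
  have hones : a ≤ matOnes (bandMatrix n w) := by
    refine le_trans ?_ (mul_le_matOnes_bandMatrix (min_le_right w n) (min_le_left w n))
    rw [← Nat.mul_min_mul_left]
    rcases Nat.eq_zero_or_pos n with rfl | hn
    · simpa using ha
    · exact le_min (Nat.lt_mul_div_succ a hn).le ha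
  cases k with
  | zero => exact ⟨bandMatrix n w, hones, by simpa using matCopies_le_one_of_fin_zero π _⟩
  | succ m =>
    obtain ⟨M, hM, hcopies⟩ := exists_matOnes_eq_bandMatrix_and_matCopies_le π n w
    refine ⟨M, hM ▸ hones, ?_⟩
    rw [show 2 * (m + 1) - 1 = 2 * m + 1 by omega, show 2 * (m + 1) - 2 = 2 * m by omega]
    refine cast_le_pow_mul_pow_div_pow hcopies ?_
    calc n * (2 * w * (m + 1) + 1) = 2 * (m + 1) * (n * w) + n := by ring
      _ ≤ (4 * (m + 1) + 1) * a := by nlinarith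

theorem supersaturation_01_matrices_sharp (k : ℕ) (hk : 0 < k) (π : Equiv.Perm (Fin k)) :
    ∃ C'' : ℝ, ∀ n a : ℕ, n ≤ a → (a : ℝ) ≤ (n : ℝ) ^ 2 →
      ∃ M : Fin n → Fin n → Bool,
        a ≤ matOnes M ∧
        (matCopies π M : ℝ) ≤ C'' * (a : ℝ) ^ (2 * k - 1) / (n : ℝ) ^ (2 * k - 2) :=
  supersaturation_01_matrices_sharp_general k π
end

section
/- Let k be a positive integer and π a permutation of {1,...,k}. There exists a constant c_π such that for all n and m, any n×n 0-1 matrix with m ones contains at least m − c_π·n copies of the permutation matrix A_π. -/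
open Finset

section Copies

variable {α β γ δ : Type*} {k : ℕ}

def permCopies [Preorder α] [Preorder β] (π : Equiv.Perm (Fin k)) (S : Set (α × β)) :
    Set ((Fin k → α) × (Fin k → β)) :=
  {xy | StrictMono xy.1 ∧ StrictMono xy.2 ∧ ∀ i, (xy.1 i, xy.2 (π i)) ∈ S}

variable {π : Equiv.Perm (Fin k)}

lemma permCopies_mono [Preorder α] [Preorder β] {S T : Set (α × β)} (h : S ⊆ T) :
    permCopies π S ⊆ permCopies π T :=
  fun _ ⟨hx, hy, hS⟩ => ⟨hx, hy, fun i => h (hS i)⟩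

lemma permCopies_nonempty_of_image [LinearOrder α] [LinearOrder β] [Preorder γ] [Preorder δ]
    {f : α → γ} {g : β → δ} (hf : Monotone f) (hg : Monotone g) {S : Set (α × β)}
    (h : (permCopies π (Prod.map f g '' S)).Nonempty) : (permCopies π S).Nonempty := by
  obtain ⟨⟨x, y⟩, hx, hy, hS⟩ := h
  choose p hpS hp using hS
  simp only [Prod.map, Prod.mk.injEq] at hp
  have hy' : ∀ j, g (p (π.symm j)).2 = y j := fun j => by simpa using (hp (π.symm j)).2
  refine ⟨(fun i => (p i).1, fun j => (p (π.symm j)).2), fun a b hab => ?_, fun a b hab => ?_,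
    fun i => by simpa using hpS i⟩
  · refine hf.reflect_lt (?_ : f (p a).1 < f (p b).1)
    rw [(hp a).1, (hp b).1]
    exact hx hab
  · refine hg.reflect_lt (?_ : g (p (π.symm a)).2 < g (p (π.symm b)).2)
    rw [hy', hy']
    exact hy hab

lemma permCopies_nonempty_of_swap [Preorder α] [Preorder β] {S : Set (α × β)}
    (h : (permCopies π⁻¹ (Prod.swap '' S)).Nonempty) : (permCopies π S).Nonempty := by
  obtain ⟨⟨x, y⟩, hx, hy, hS⟩ := h
  refine ⟨(y, x), hy, hx, fun j => ?_⟩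
  simpa [Set.image_swap_eq_preimage_swap] using hS (π j)

lemma permCopies_product_nonempty [LinearOrder α] [LinearOrder β] {T : Finset α} {C : Finset β}
    (hT : k ≤ #T) (hC : k ≤ #C) : (permCopies π (↑T ×ˢ ↑C : Set (α × β))).Nonempty :=
  ⟨(T.orderEmbOfCardLe hT, C.orderEmbOfCardLe hC), (T.orderEmbOfCardLe hT).strictMono,
    (C.orderEmbOfCardLe hC).strictMono,
    fun i => ⟨T.orderEmbOfCardLe_mem hT i, C.orderEmbOfCardLe_mem hC (π i)⟩⟩

end Copies

section Blocks

variable {k : ℕ} {π : Equiv.Perm (Fin k)} (S : Finset (ℕ × ℕ)) (s : ℕ)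

def contraction : Finset (ℕ × ℕ) := S.image (Prod.map (· / s) (· / s))

def block (B : ℕ × ℕ) : Finset (ℕ × ℕ) :=
  S.filter fun p => Prod.map (· / s) (· / s) p = B

variable {S s}

@[simp]
lemma mem_block {p B : ℕ × ℕ} :
    p ∈ block S s B ↔ p ∈ S ∧ p.1 / s = B.1 ∧ p.2 / s = B.2 := by
  simp [block, Prod.ext_iff]

lemma subset_Ico_of_forall_div_eq (hs : 0 < s) {T : Finset ℕ} {I : ℕ}
    (h : ∀ a ∈ T, a / s = I) :
    T ⊆ Ico (I * s) (I * s + s) := fun a ha => by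
  rw [← h a ha, mem_Ico]
  exact ⟨Nat.div_mul_le_self a s, Nat.lt_div_mul_add hs⟩

lemma card_image_fst_block_le (hs : 0 < s) (B : ℕ × ℕ) :
    #((block S s B).image Prod.fst) ≤ s := by
  refine (card_le_card (subset_Ico_of_forall_div_eq hs (I := B.1) ?_)).trans (by simp)
  simp only [mem_image, mem_block]
  rintro _ ⟨p, ⟨-, h, -⟩, rfl⟩
  exact h

lemma card_image_snd_block_le (hs : 0 < s) (B : ℕ × ℕ) :
    #((block S s B).image Prod.snd) ≤ s := by
  refine (card_le_card (subset_Ico_of_forall_div_eq hs (I := B.2) ?_)).trans (by simp)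
  simp only [mem_image, mem_block]
  rintro _ ⟨p, ⟨-, -, h⟩, rfl⟩
  exact h

lemma card_block_le (hs : 0 < s) (B : ℕ × ℕ) :
    #(block S s B) ≤ (if k ≤ #((block S s B).image Prod.snd) then s * s else 0)
      + (if k ≤ #((block S s B).image Prod.fst) then s * s else 0) + (k - 1) ^ 2 := by
  have hprod :
      #(block S s B) ≤ #((block S s B).image Prod.fst) * #((block S s B).image Prod.snd) :=
    (card_le_card subset_product).trans (card_product _ _).le
  have hsq : #(block S s B) ≤ s * s :=
    hprod.trans (Nat.mul_le_mul (card_image_fst_block_le hs B) (card_image_snd_block_le hs B))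
  split_ifs with hwide htall htall <;> try omega
  calc #(block S s B) ≤ #((block S s B).image Prod.fst) * #((block S s B).image Prod.snd) := hprod
    _ ≤ 0 + 0 + (k - 1) ^ 2 := by
      rw [sq, zero_add, zero_add]
      exact Nat.mul_le_mul (by omega) (by omega)

lemma image_fst_block (I J : ℕ) :
    (block S s (I, J)).image Prod.fst = (block (S.image Prod.swap) s (J, I)).image Prod.snd := by
  ext a
  simp [block, and_comm]

lemma card_filter_wide_block_le (hs : 0 < s)
    (hS : ¬(permCopies π (S : Set (ℕ × ℕ))).Nonempty) (T : Finset ℕ) (J : ℕ) :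
    #{I ∈ T | k ≤ #((block S s (I, J)).image Prod.snd)} ≤ (k - 1) * s.choose k := by
  set W := {I ∈ T | k ≤ #((block S s (I, J)).image Prod.snd)}
  have hsub : ∀ I ∈ W, ∃ C ⊆ (block S s (I, J)).image Prod.snd, #C = k :=
    fun I hI => exists_subset_card_eq (mem_filter.1 hI).2
  choose! F hFsub hFcard using hsub
  have hmaps : ∀ I ∈ W, F I ∈ powersetCard k (Ico (J * s) (J * s + s)) := by
    refine fun I hI => mem_powersetCard.2 ⟨(hFsub I hI).trans ?_, hFcard I hI⟩
    refine subset_Ico_of_forall_div_eq hs fun a ha => ?_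
    obtain ⟨p, hp, rfl⟩ := mem_image.1 ha
    exact (mem_block.1 hp).2.2
  by_contra! hW
  obtain ⟨C, hC, hfiber⟩ := exists_lt_card_fiber_of_mul_lt_card_of_maps_to hmaps
    (by rw [card_powersetCard, Nat.card_Ico, Nat.add_sub_cancel_left, mul_comm]; exact hW)
  apply hS
  refine permCopies_nonempty_of_image (f := (· / s)) (g := id)
    (fun _ _ h => Nat.div_le_div_right h) monotone_id ?_
  refine (permCopies_product_nonempty (T := {I ∈ W | F I = C}) (by omega)
    ((mem_powersetCard.1 hC).2).ge).mono (permCopies_mono ?_)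
  rintro ⟨I, c⟩ ⟨hI, hc⟩
  obtain ⟨hIW, rfl⟩ := mem_filter.1 hI
  obtain ⟨p, hp, rfl⟩ := mem_image.1 (hFsub I hIW hc)
  rw [mem_block] at hp
  exact ⟨p, hp.1, Prod.ext hp.2.1 rfl⟩

lemma card_filter_tall_block_le (hs : 0 < s)
    (hS : ¬(permCopies π (S : Set (ℕ × ℕ))).Nonempty) (T : Finset ℕ) (I : ℕ) :
    #{J ∈ T | k ≤ #((block S s (I, J)).image Prod.fst)} ≤ (k - 1) * s.choose k := by
  simp_rw [image_fst_block]
  refine card_filter_wide_block_le (π := π⁻¹) hs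
    (fun h => hS (permCopies_nonempty_of_swap ?_)) T I
  rwa [coe_image] at h

end Blocks

section MarcusTardos

variable {k : ℕ} {π : Equiv.Perm (Fin k)} {S : Finset (ℕ × ℕ)} {s : ℕ}

lemma card_le_of_contraction_subset (hs : 0 < s)
    (hS : ¬(permCopies π (S : Set (ℕ × ℕ))).Nonempty)
    {q : ℕ} (hq : contraction S s ⊆ range q ×ˢ range q) :
    #S ≤ 2 * (q * ((k - 1) * s.choose k)) * (s * s) + (k - 1) ^ 2 * #(contraction S s) := by
  set A := (k - 1) * s.choose k
  have hwide : #{B ∈ contraction S s | k ≤ #((block S s B).image Prod.snd)} ≤ q * A :=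
    calc _ ≤ #{B ∈ range q ×ˢ range q | k ≤ #((block S s B).image Prod.snd)} :=
          card_le_card (filter_subset_filter _ hq)
      _ = ∑ J ∈ range q, #{I ∈ range q | k ≤ #((block S s (I, J)).image Prod.snd)} := by
          simp only [card_filter, sum_product_right]
      _ ≤ ∑ _J ∈ range q, A := sum_le_sum fun J _ => card_filter_wide_block_le hs hS _ J
      _ = q * A := by simp
  have htall : #{B ∈ contraction S s | k ≤ #((block S s B).image Prod.fst)} ≤ q * A :=
    calc _ ≤ #{B ∈ range q ×ˢ range q | k ≤ #((block S s B).image Prod.fst)} :=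
          card_le_card (filter_subset_filter _ hq)
      _ = ∑ I ∈ range q, #{J ∈ range q | k ≤ #((block S s (I, J)).image Prod.fst)} := by
          simp only [card_filter, sum_product]
      _ ≤ ∑ _I ∈ range q, A := sum_le_sum fun I _ => card_filter_tall_block_le hs hS _ I
      _ = q * A := by simp
  calc #S = ∑ B ∈ contraction S s, #(block S s B) := card_eq_sum_card_image _ _
    _ ≤ ∑ B ∈ contraction S s, ((if k ≤ #((block S s B).image Prod.snd) then s * s else 0)
          + (if k ≤ #((block S s B).image Prod.fst) then s * s else 0) + (k - 1) ^ 2) :=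
        sum_le_sum fun B _ => card_block_le hs B
    _ = #{B ∈ contraction S s | k ≤ #((block S s B).image Prod.snd)} * (s * s)
          + #{B ∈ contraction S s | k ≤ #((block S s B).image Prod.fst)} * (s * s)
          + #(contraction S s) * (k - 1) ^ 2 := by
        simp only [sum_add_distrib, ← sum_filter, sum_const, smul_eq_mul]
    _ ≤ 2 * (q * A) * (s * s) + (k - 1) ^ 2 * #(contraction S s) := by
        nlinarith

lemma mul_le_of_block_recursion {n s q c D E : ℕ} (hq : s * q ≤ n + s) (hs : E + 3 ≤ s)
    (hc : D + s * E + s ≤ c) (hn : c < n) : q * (D + c * E) ≤ c * n := by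
  refine Nat.le_of_mul_le_mul_left ?_ (show 0 < s by omega)
  have h1 : n * D ≤ c * n := by rw [mul_comm c]; exact Nat.mul_le_mul_left n (by omega)
  have h2 : s * D ≤ c * n := by rw [mul_comm c]; exact Nat.mul_le_mul (by omega) (by omega)
  have h3 : s * (c * E) ≤ c * n := by
    rw [mul_left_comm]; exact Nat.mul_le_mul_left c (by omega)
  calc s * (q * (D + c * E)) = s * q * (D + c * E) := by ring
    _ ≤ (n + s) * (D + c * E) := Nat.mul_le_mul_right _ hq
    _ = n * D + s * D + s * (c * E) + c * n * E := by ring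
    _ ≤ c * n * (E + 3) := by linarith
    _ ≤ s * (c * n) := by rw [mul_comm s]; exact Nat.mul_le_mul_left _ hs

theorem card_le_mul_of_not_permCopies_nonempty {c : ℕ} (hs : (k - 1) ^ 2 + 3 ≤ s)
    (hc : 2 * ((k - 1) * s.choose k) * (s * s) + s * (k - 1) ^ 2 + s ≤ c) (n : ℕ)
    (hSn : S ⊆ range n ×ˢ range n) (hS : ¬(permCopies π (S : Set (ℕ × ℕ))).Nonempty) :
    #S ≤ c * n := by
  induction n using Nat.strong_induction_on generalizing S with
  | _ n ih =>
  rcases le_or_gt n c with hn | hn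
  · calc #S ≤ n * n := (card_le_card hSn).trans (by simp)
      _ ≤ c * n := Nat.mul_le_mul_right n hn
  set q := n / s + 1
  have hq : contraction S s ⊆ range q ×ˢ range q := by
    intro B hB
    obtain ⟨p, hp, rfl⟩ := mem_image.1 hB
    have hp' := hSn hp
    simp only [mem_product, mem_range, Prod.map] at hp' ⊢
    exact ⟨Nat.lt_succ_of_le (Nat.div_le_div_right hp'.1.le),
      Nat.lt_succ_of_le (Nat.div_le_div_right hp'.2.le)⟩
  have hcontr : ¬(permCopies π (contraction S s : Set (ℕ × ℕ))).Nonempty := fun h =>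
    hS <| permCopies_nonempty_of_image (fun _ _ h => Nat.div_le_div_right h)
      (fun _ _ h => Nat.div_le_div_right h) (by rwa [contraction, coe_image] at h)
  have hqn : q < n := by
    have : n / s ≤ n / 3 := Nat.div_le_div_left (by omega) (by norm_num)
    omega
  have hcard := ih q hqn hq hcontr
  calc #S ≤ 2 * (q * ((k - 1) * s.choose k)) * (s * s) + (k - 1) ^ 2 * #(contraction S s) :=
        card_le_of_contraction_subset (by omega) hS hq
    _ ≤ q * (2 * ((k - 1) * s.choose k) * (s * s) + c * (k - 1) ^ 2) := by nlinarith
    _ ≤ c * n :=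
        mul_le_of_block_recursion (by simpa [q, Nat.mul_succ] using Nat.mul_div_le n s) hs
          (by linarith) hn

end MarcusTardos

theorem exists_card_le_mul_of_not_permCopies_nonempty {k : ℕ} (π : Equiv.Perm (Fin k)) :
    ∃ c : ℕ, ∀ (n : ℕ) (S : Finset (Fin n × Fin n)),
      ¬(permCopies π (S : Set (Fin n × Fin n))).Nonempty → #S ≤ c * n := by
  set s := k ^ 2 + 3
  have hs : (k - 1) ^ 2 + 3 ≤ s := by
    have := Nat.pow_le_pow_left (Nat.sub_le k 1) 2
    omega
  refine ⟨2 * ((k - 1) * s.choose k) * (s * s) + s * (k - 1) ^ 2 + s, fun n S hS => ?_⟩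
  have hinj : Function.Injective (Prod.map Fin.val Fin.val : Fin n × Fin n → ℕ × ℕ) :=
    Fin.val_injective.prodMap Fin.val_injective
  rw [← card_image_of_injective S hinj]
  refine card_le_mul_of_not_permCopies_nonempty (π := π) hs le_rfl n ?_ fun h => hS ?_
  · intro p hp
    obtain ⟨p, -, rfl⟩ := mem_image.1 hp
    simp
  · exact permCopies_nonempty_of_image Fin.val_strictMono.monotone Fin.val_strictMono.monotone
      (by rwa [coe_image] at h)

theorem exists_subset_not_permCopies_nonempty_card_le {α β : Type*} [LinearOrder α]
    [LinearOrder β] [Finite α] [Finite β] {k : ℕ} (hk : 0 < k) (π : Equiv.Perm (Fin k))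
    (S : Finset (α × β)) :
    ∃ R ⊆ S, ¬(permCopies π (R : Set (α × β))).Nonempty ∧
      #S ≤ Nat.card (permCopies π (S : Set (α × β))) + #R := by
  classical
  let i₀ : Fin k := ⟨0, hk⟩
  set T := (fun xy => (xy.1 i₀, xy.2 (π i₀))) '' permCopies π (S : Set (α × β))
  refine ⟨{p ∈ S | p ∉ T}, filter_subset _ _, ?_, ?_⟩
  · rintro ⟨xy, hxy⟩
    have hS := permCopies_mono (π := π) (coe_subset.2 (filter_subset (· ∉ T) S))
    exact (mem_filter.1 (hxy.2.2 i₀)).2 ⟨xy, hS hxy, rfl⟩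
  have hT : #{p ∈ S | p ∈ T} ≤ Nat.card (permCopies π (S : Set (α × β))) :=
    calc #{p ∈ S | p ∈ T} = (({p ∈ S | p ∈ T} : Finset _) : Set (α × β)).ncard :=
          (Set.ncard_coe_finset _).symm
      _ ≤ T.ncard := Set.ncard_le_ncard (fun p hp => (mem_filter.1 hp).2)
      _ ≤ (permCopies π (S : Set (α × β))).ncard := Set.ncard_image_le
      _ = _ := (Nat.card_coe_set_eq _).symm
  rw [← card_filter_add_card_filter_not (s := S) (fun p => p ∈ T)]
  exact Nat.add_le_add_right hT _

/-- Any `n × n` 0-1 matrix with `m` ones contains at least `m - c_π · n` copies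
of the permutation matrix `A_π`. -/
theorem weak_supersaturation (k : ℕ) (hk : 0 < k) (π : Equiv.Perm (Fin k)) :
    ∃ c : ℝ, ∀ (n m : ℕ) (M : Fin n → Fin n → Bool), matOnes M = m →
      (m : ℝ) - c * n ≤ (matCopies π M : ℝ) := by
  obtain ⟨c, hc⟩ := exists_card_le_mul_of_not_permCopies_nonempty π
  refine ⟨c, fun n m M hm => ?_⟩
  set S : Finset (Fin n × Fin n) := {p | M p.1 p.2 = true}
  have hones : matOnes M = #S := by
    simp [matOnes, S, Nat.card_eq_fintype_card, Fintype.card_subtype]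
  have hcopies : matCopies π M = Nat.card (permCopies π (S : Set (Fin n × Fin n))) := by
    simp only [matCopies, permCopies, S, coe_filter, mem_univ, true_and]
    rfl
  obtain ⟨R, -, hR, hSR⟩ := exists_subset_not_permCopies_nonempty_card_le hk π S
  have : m ≤ matCopies π M + c * n := by
    have := hc n R hR
    omega
  rw [sub_le_iff_le_add]
  exact_mod_cast this
end

section
/- Let k be an integer with k > 1 and π a permutation of {1,...,k}. There exists a constant C = C(π) such that for all integers m, n ≥ 0, the number of n×n 0-1 matrices containing at most m copies of the permutation matrix A_π is at most exp(C·(n + (m·n^(2k-2))^(1/(2k-1)))). -/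
/-!
A `π`-free `n × n` matrix has `O(n)` ones (Marcus–Tardos). Contract it into `k² × k²` blocks: in
one column strip at most `(k - 1) * C(k², k)` blocks meet `k` distinct columns, for otherwise `k` of
them meet the same `k` columns and carry a copy, and symmetrically for rows. Every other nonzero
block holds at most `(k - 1)²` ones, and the contraction is again `π`-free.

Supersaturation: deleting one entry of each copy gives `#ones ≤ c n + #copies`. Averaging this
over all `r × r` submatrices with `r ≈ c n² / #ones` yields
`#ones ^ (2k - 1) = O(#copies * n ^ (2k - 2))` once `#ones ≥ 4 c n`.

Counting: a matrix with at most `m` copies is determined by its `2 × 2`-block contraction `M₀`,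
which again has at most `m` copies, and by its entries inside the blocks of the ones of `M₀`. By
supersaturation there are `exp O(n + (m n ^ (2k - 2)) ^ (1 / (2k - 1)))` choices for the latter, an
exponent that drops by a constant factor when `n` is halved, so the recursion sums to a bound of
the same order.
-/

open Finset

namespace FewCopies

variable {k n a r K : ℕ}

def ones (M : Fin n → Fin n → Bool) : Finset (Fin n × Fin n) := {p | M p.1 p.2}

open Classical in
noncomputable def copies (π : Equiv.Perm (Fin k)) (M : Fin n → Fin n → Bool) :
    Finset ((Fin k → Fin n) × (Fin k → Fin n)) :=
  {xy | StrictMono xy.1 ∧ StrictMono xy.2 ∧ ∀ i, M (xy.1 i) (xy.2 (π i))}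

@[simp]
lemma mem_ones {M : Fin n → Fin n → Bool} {p : Fin n × Fin n} : p ∈ ones M ↔ M p.1 p.2 := by
  simp [ones]

@[simp]
lemma mem_copies {π : Equiv.Perm (Fin k)} {M : Fin n → Fin n → Bool}
    {xy : (Fin k → Fin n) × (Fin k → Fin n)} :
    xy ∈ copies π M ↔ StrictMono xy.1 ∧ StrictMono xy.2 ∧ ∀ i, M (xy.1 i) (xy.2 (π i)) := by
  simp [copies]

lemma matCopies_eq_card_copies (π : Equiv.Perm (Fin k)) (M : Fin n → Fin n → Bool) :
    matCopies π M = #(copies π M) := by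
  classical
  rw [matCopies, Nat.card_eq_fintype_card, Fintype.card_subtype, copies]

lemma card_ones_le (M : Fin n → Fin n → Bool) : #(ones M) ≤ n * n := by
  simpa using card_le_univ (ones M)

lemma swap_mem_copies_transpose {π : Equiv.Perm (Fin k)} {M : Fin n → Fin n → Bool}
    {xy : (Fin k → Fin n) × (Fin k → Fin n)} (h : xy ∈ copies π M) :
    xy.swap ∈ copies π.symm (fun x y => M y x) := by
  obtain ⟨hx, hy, hM⟩ := mem_copies.1 h
  exact mem_copies.2 ⟨hy, hx, fun i => by simpa using hM (π.symm i)⟩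

lemma copies_transpose_eq_empty {π : Equiv.Perm (Fin k)} {M : Fin n → Fin n → Bool}
    (h : copies π M = ∅) : copies π.symm (fun x y => M y x) = ∅ := by
  refine eq_empty_of_forall_notMem fun xy hxy => ?_
  simpa [h] using swap_mem_copies_transpose hxy

def contract (φ : Fin n → Fin a) (M : Fin n → Fin n → Bool) (i j : Fin a) : Bool :=
  decide ((i, j) ∈ (ones M).image (Prod.map φ φ))

section Contraction

variable {φ : Fin n → Fin a} {M : Fin n → Fin n → Bool}

lemma ones_contract : ones (contract φ M) = (ones M).image (Prod.map φ φ) := by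
  ext p
  simp [contract]

lemma contract_eq_true_iff {i j : Fin a} :
    contract φ M i j ↔ ∃ x y, M x y ∧ φ x = i ∧ φ y = j := by
  simp [contract]

lemma card_copies_contract_le (hφ : Monotone φ) (π : Equiv.Perm (Fin k)) :
    #(copies π (contract φ M)) ≤ #(copies π M) := by
  refine card_le_card_of_surjOn (fun xy => (φ ∘ xy.1, φ ∘ xy.2)) fun IJ hIJ => ?_
  obtain ⟨hI, hJ, hM⟩ := mem_copies.1 hIJ
  choose x y hxy using fun t => contract_eq_true_iff.1 (hM t)
  have hx (t : Fin k) : φ (x t) = IJ.1 t := (hxy t).2.1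
  have hy (t : Fin k) : φ (y (π.symm t)) = IJ.2 t := by simpa using (hxy (π.symm t)).2.2
  refine ⟨(x, y ∘ π.symm), mem_copies.2 ⟨fun s t hst => hφ.reflect_lt ?_,
    fun s t hst => hφ.reflect_lt ?_, fun t => by simpa using (hxy t).1⟩,
    Prod.ext (funext hx) (funext hy)⟩
  · simpa only [hx] using hI hst
  · simpa only [Function.comp_apply, hy] using hJ hst

lemma copies_contract_eq_empty (hφ : Monotone φ) {π : Equiv.Perm (Fin k)} (hM : copies π M = ∅) :
    copies π (contract φ M) = ∅ :=
  card_eq_zero.1 <| Nat.le_zero.1 <| (card_copies_contract_le hφ π).trans_eq (by simp [hM])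

end Contraction

def block (φ : Fin n → Fin a) (M : Fin n → Fin n → Bool) (p : Fin a × Fin a) :
    Finset (Fin n × Fin n) :=
  {q ∈ ones M | Prod.map φ φ q = p}

section Blocks

variable {φ : Fin n → Fin a} {M : Fin n → Fin n → Bool}

lemma mem_image_snd_block {p : Fin a × Fin a} {y : Fin n} :
    y ∈ (block φ M p).image Prod.snd ↔ ∃ x, M x y ∧ φ x = p.1 ∧ φ y = p.2 := by
  simp [block, Prod.ext_iff]

lemma image_fst_block (p : Fin a × Fin a) :
    (block φ M p).image Prod.fst = (block φ (fun x y => M y x) p.swap).image Prod.snd := by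
  ext x
  simp [block, Prod.ext_iff, and_comm, and_left_comm]

lemma card_block_le (hK : ∀ i, #{x | φ x = i} ≤ K) (p : Fin a × Fin a) :
    #(block φ M p) ≤ (k - 1) ^ 2 + (if k ≤ #((block φ M p).image Prod.fst) then K ^ 2 else 0)
      + (if k ≤ #((block φ M p).image Prod.snd) then K ^ 2 else 0) := by
  set rows := (block φ M p).image Prod.fst
  set cols := (block φ M p).image Prod.snd
  have hprod : #(block φ M p) ≤ #rows * #cols :=
    (card_le_card subset_product).trans (card_product _ _).le
  have hrows : #rows ≤ K := by
    refine (card_le_card fun x hx => ?_).trans (hK p.1)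
    obtain ⟨q, hq, rfl⟩ := mem_image.1 hx
    simp_all [block, Prod.ext_iff]
  have hcols : #cols ≤ K := by
    refine (card_le_card fun y hy => ?_).trans (hK p.2)
    obtain ⟨q, hq, rfl⟩ := mem_image.1 hy
    simp_all [block, Prod.ext_iff]
  have hK2 : #(block φ M p) ≤ K ^ 2 := hprod.trans (sq K ▸ Nat.mul_le_mul hrows hcols)
  by_cases hr : k ≤ #rows
  · rw [if_pos hr]
    omega
  by_cases hc : k ≤ #cols
  · rw [if_pos hc]
    omega
  have hsmall : #rows * #cols ≤ (k - 1) * (k - 1) := Nat.mul_le_mul (by omega) (by omega)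
  rw [if_neg hr, if_neg hc, sq]
  omega

/-- The Marcus–Tardos pigeonhole: `k` blocks of one column strip that meet the same `k` columns
carry a copy of every `k`-permutation. -/
lemma card_wide_blocks_le (hφ : Monotone φ) (hK : ∀ i, #{x | φ x = i} ≤ K)
    {π : Equiv.Perm (Fin k)} (hM : copies π M = ∅) (j : Fin a) :
    #{i | k ≤ #((block φ M (i, j)).image Prod.snd)} ≤ (k - 1) * K.choose k := by
  set W : Finset (Fin a) := {i | k ≤ #((block φ M (i, j)).image Prod.snd)}
  have hsub (i : Fin a) (hi : i ∈ W) : ∃ S ⊆ (block φ M (i, j)).image Prod.snd, #S = k :=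
    exists_subset_card_eq (mem_filter.1 hi).2
  choose! S hS using hsub
  have hmaps : ∀ i ∈ W, S i ∈ ({y | φ y = j} : Finset (Fin n)).powersetCard k := by
    intro i hi
    refine mem_powersetCard.2 ⟨fun y hy => ?_, (hS i hi).2⟩
    obtain ⟨x, -, -, hy⟩ := mem_image_snd_block.1 ((hS i hi).1 hy)
    simpa using hy
  by_contra! hlt
  have hcard : #(({y | φ y = j} : Finset (Fin n)).powersetCard k) * (k - 1) < #W := by
    rw [card_powersetCard, mul_comm]
    exact lt_of_le_of_lt (Nat.mul_le_mul_left _ (Nat.choose_le_choose k (hK j))) hlt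
  obtain ⟨T, hT, hfib⟩ := exists_lt_card_fiber_of_mul_lt_card_of_maps_to hmaps hcard
  obtain ⟨B, hB, hBk⟩ := exists_subset_card_eq (show k ≤ #{i ∈ W | S i = T} by omega)
  have hTk : #T = k := (mem_powersetCard.1 hT).2
  set I := B.orderEmbOfFin hBk
  set c := T.orderEmbOfFin hTk
  have hrow (t : Fin k) : ∃ x, M x (c (π t)) ∧ φ x = I t := by
    have hIt := mem_filter.1 (hB (B.orderEmbOfFin_mem hBk t))
    have hc : c (π t) ∈ S (I t) := hIt.2 ▸ T.orderEmbOfFin_mem hTk (π t)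
    obtain ⟨x, hx, hφx, -⟩ := mem_image_snd_block.1 ((hS _ hIt.1).1 hc)
    exact ⟨x, hx, hφx⟩
  choose x hx using hrow
  have hcopy : (x, ⇑c) ∈ copies π M := mem_copies.2
    ⟨fun s t hst => hφ.reflect_lt (by simpa only [(hx s).2, (hx t).2] using I.strictMono hst),
      c.strictMono, fun t => (hx t).1⟩
  simp [hM] at hcopy

lemma card_wide_le (hφ : Monotone φ) (hK : ∀ i, #{x | φ x = i} ≤ K)
    {π : Equiv.Perm (Fin k)} (hM : copies π M = ∅) :
    #{p | k ≤ #((block φ M p).image Prod.snd)} ≤ a * ((k - 1) * K.choose k) := by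
  calc #{p | k ≤ #((block φ M p).image Prod.snd)}
      = ∑ j, #{i | k ≤ #((block φ M (i, j)).image Prod.snd)} := by
        simp only [card_filter]
        exact Fintype.sum_prod_type_right _
    _ ≤ ∑ _j : Fin a, (k - 1) * K.choose k := sum_le_sum fun j _ => card_wide_blocks_le hφ hK hM j
    _ = a * ((k - 1) * K.choose k) := by simp

lemma card_tall_le (hφ : Monotone φ) (hK : ∀ i, #{x | φ x = i} ≤ K)
    {π : Equiv.Perm (Fin k)} (hM : copies π M = ∅) :
    #{p | k ≤ #((block φ M p).image Prod.fst)} ≤ a * ((k - 1) * K.choose k) := by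
  calc #{p | k ≤ #((block φ M p).image Prod.fst)}
      = #{p | k ≤ #((block φ (fun x y => M y x) p).image Prod.snd)} := by
        simp_rw [image_fst_block]
        exact card_equiv (Equiv.prodComm _ _) (by simp)
    _ ≤ _ := card_wide_le hφ hK (copies_transpose_eq_empty hM)

lemma card_ones_le_contract (hφ : Monotone φ) (hK : ∀ i, #{x | φ x = i} ≤ K)
    {π : Equiv.Perm (Fin k)} (hM : copies π M = ∅) :
    #(ones M) ≤ (k - 1) ^ 2 * #(ones (contract φ M)) + 2 * K ^ 2 * ((k - 1) * K.choose k) * a := by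
  have hsum_ite (P : Fin a × Fin a → Prop) [DecidablePred P] :
      ∑ p ∈ (ones M).image (Prod.map φ φ), (if P p then K ^ 2 else 0) ≤ K ^ 2 * #{p | P p} := by
    rw [← sum_filter, sum_const, smul_eq_mul, mul_comm]
    exact Nat.mul_le_mul_left _ (card_le_card (filter_subset_filter _ (subset_univ _)))
  calc #(ones M) = ∑ p ∈ (ones M).image (Prod.map φ φ), #(block φ M p) :=
        card_eq_sum_card_image _ _
    _ ≤ ∑ p ∈ (ones M).image (Prod.map φ φ), ((k - 1) ^ 2
          + (if k ≤ #((block φ M p).image Prod.fst) then K ^ 2 else 0)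
          + (if k ≤ #((block φ M p).image Prod.snd) then K ^ 2 else 0)) :=
        sum_le_sum fun p _ => card_block_le hK p
    _ ≤ (k - 1) ^ 2 * #(ones (contract φ M))
          + K ^ 2 * #{p | k ≤ #((block φ M p).image Prod.fst)}
          + K ^ 2 * #{p | k ≤ #((block φ M p).image Prod.snd)} := by
        rw [sum_add_distrib, sum_add_distrib, sum_const, smul_eq_mul, ones_contract, mul_comm]
        gcongr <;> exact hsum_ite _
    _ ≤ _ := by
        have := card_tall_le hφ hK hM
        have := card_wide_le hφ hK hM
        nlinarith

end Blocks

def blockIndex (K n : ℕ) (x : Fin n) : Fin (n / K + 1) :=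
  ⟨x / K, Nat.lt_succ_of_le (Nat.div_le_div_right x.2.le)⟩

lemma blockIndex_monotone : Monotone (blockIndex K n) :=
  fun _ _ h => Nat.div_le_div_right (Fin.le_def.1 h)

lemma card_blockIndex_fiber_le (hK : 0 < K) (i : Fin (n / K + 1)) :
    #{x | blockIndex K n x = i} ≤ K := by
  refine (card_le_card_of_injOn (s := {x | blockIndex K n x = i}) (t := univ)
    (fun x => (⟨x % K, Nat.mod_lt _ hK⟩ : Fin K))
    (fun _ _ => mem_coe.2 (mem_univ _)) fun x hx y hy hxy => ?_).trans_eq (card_fin K)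
  simp only [coe_filter, mem_univ, true_and, Set.mem_ofPred_eq, blockIndex, Fin.ext_iff]
    at hx hy hxy
  exact Fin.ext (Nat.ext_div_modEq (hx.trans hy.symm) hxy)

lemma marcus_tardos_arith {c D : ℕ} (hk : 2 ≤ k) (hn : k ^ 3 ≤ n) (hc : D ≤ c) :
    (k - 1) ^ 2 * (c * (n / k ^ 2 + 1)) + D * (n / k ^ 2 + 1) ≤ c * n := by
  obtain ⟨e, rfl⟩ : ∃ e, k = e + 1 := ⟨k - 1, by omega⟩
  simp only [Nat.add_sub_cancel]
  set q := n / (e + 1) ^ 2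
  have hq : (e + 1) ^ 2 * q ≤ n := Nat.mul_div_le n _
  have h1 : (e + 1) ^ 3 * (q + 1) ≤ (e + 2) * n := by nlinarith [Nat.mul_le_mul_left (e + 1) hq]
  have h2 : (e ^ 2 * c + D) * (e + 2) ≤ (e + 1) ^ 3 * c := by nlinarith
  refine Nat.le_of_mul_le_mul_left ?_ (show 0 < (e + 1) ^ 3 by positivity)
  calc (e + 1) ^ 3 * (e ^ 2 * (c * (q + 1)) + D * (q + 1))
      = (e ^ 2 * c + D) * ((e + 1) ^ 3 * (q + 1)) := by ring
    _ ≤ (e ^ 2 * c + D) * ((e + 2) * n) := Nat.mul_le_mul_left _ h1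
    _ = (e ^ 2 * c + D) * (e + 2) * n := by ring
    _ ≤ (e + 1) ^ 3 * c * n := Nat.mul_le_mul_right _ h2
    _ = (e + 1) ^ 3 * (c * n) := by ring

theorem marcus_tardos (hk : 1 < k) (π : Equiv.Perm (Fin k)) :
    ∃ c, k ≤ c ∧ ∀ n (M : Fin n → Fin n → Bool), copies π M = ∅ → #(ones M) ≤ c * n := by
  set D := 2 * (k ^ 2) ^ 2 * ((k - 1) * (k ^ 2).choose k)
  refine ⟨k ^ 3 + D, le_add_right (Nat.le_self_pow (by norm_num) k), fun n => ?_⟩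
  induction n using Nat.strong_induction_on with
  | _ n ih =>
  intro M hM
  by_cases hn : n < k ^ 3
  · calc #(ones M) ≤ n * n := card_ones_le M
      _ ≤ (k ^ 3 + D) * n := Nat.mul_le_mul_right _ (by omega)
  have hK : 0 < k ^ 2 := by positivity
  have hlt : n / k ^ 2 + 1 < n := by
    have : n / k ^ 2 ≤ n / 4 := Nat.div_le_div_left (by nlinarith) (by norm_num)
    have : 2 ^ 3 ≤ k ^ 3 := Nat.pow_le_pow_left hk 3
    omega
  have hcontract := ih _ hlt _ (copies_contract_eq_empty blockIndex_monotone hM)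
  calc #(ones M) ≤ (k - 1) ^ 2 * #(ones (contract (blockIndex (k ^ 2) n) M))
        + D * (n / k ^ 2 + 1) :=
        card_ones_le_contract blockIndex_monotone (card_blockIndex_fiber_le hK) hM
    _ ≤ (k - 1) ^ 2 * ((k ^ 3 + D) * (n / k ^ 2 + 1)) + D * (n / k ^ 2 + 1) := by gcongr
    _ ≤ (k ^ 3 + D) * n := marcus_tardos_arith hk (by omega) (by omega)

/-- Deleting one entry of every copy leaves a matrix with no copy. -/
lemma card_ones_le_add_card_copies (hk : 0 < k) {c : ℕ} {π : Equiv.Perm (Fin k)}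
    (hc : ∀ n (M : Fin n → Fin n → Bool), copies π M = ∅ → #(ones M) ≤ c * n)
    (M : Fin n → Fin n → Bool) : #(ones M) ≤ c * n + #(copies π M) := by
  classical
  let cell (xy : (Fin k → Fin n) × (Fin k → Fin n)) : Fin n × Fin n :=
    (xy.1 ⟨0, hk⟩, xy.2 (π ⟨0, hk⟩))
  set D := (copies π M).image cell
  let M' (x y : Fin n) : Bool := M x y && decide ((x, y) ∉ D)
  have hM' : copies π M' = ∅ := by
    refine eq_empty_of_forall_notMem fun xy hxy => ?_
    obtain ⟨hx, hy, h⟩ := mem_copies.1 hxy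
    simp only [M', Bool.and_eq_true, decide_eq_true_eq] at h
    exact (h ⟨0, hk⟩).2 (mem_image_of_mem cell (mem_copies.2 ⟨hx, hy, fun i => (h i).1⟩))
  calc #(ones M) ≤ #(ones M' ∪ D) := card_le_card fun p hp => by
        by_cases hpD : p ∈ D <;> simp_all [M']
    _ ≤ #(ones M') + #D := card_union_le _ _
    _ ≤ c * n + #(copies π M) := add_le_add (hc n M' hM') card_image_le

section Sampling

variable {R S : Finset (Fin n)} (M : Fin n → Fin n → Bool)

lemma exists_orderEmbOfFin_eq (hR : #R = r) {x : Fin n} (hx : x ∈ R) :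
    ∃ a, R.orderEmbOfFin hR a = x := by
  rw [← Set.mem_range, range_orderEmbOfFin]
  exact hx

lemma card_ones_comp_orderEmbOfFin (hR : #R = r) (hS : #S = r) :
    #(ones fun a b => M (R.orderEmbOfFin hR a) (S.orderEmbOfFin hS b))
      = #{p ∈ ones M | p.1 ∈ R ∧ p.2 ∈ S} := by
  rw [← card_image_of_injective _
    ((R.orderEmbOfFin hR).injective.prodMap (S.orderEmbOfFin hS).injective)]
  congr 1
  ext ⟨x, y⟩
  simp only [mem_image, mem_ones, mem_filter, Prod.exists, Prod.map, Prod.mk.injEq]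
  constructor
  · rintro ⟨a, b, h, rfl, rfl⟩
    exact ⟨h, orderEmbOfFin_mem _ _ _, orderEmbOfFin_mem _ _ _⟩
  · rintro ⟨h, hx, hy⟩
    obtain ⟨a, rfl⟩ := exists_orderEmbOfFin_eq hR hx
    obtain ⟨b, rfl⟩ := exists_orderEmbOfFin_eq hS hy
    exact ⟨a, b, h, rfl, rfl⟩

lemma card_copies_comp_orderEmbOfFin (hR : #R = r) (hS : #S = r) (π : Equiv.Perm (Fin k)) :
    #(copies π fun a b => M (R.orderEmbOfFin hR a) (S.orderEmbOfFin hS b))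
      = #{xy ∈ copies π M | (∀ i, xy.1 i ∈ R) ∧ ∀ i, xy.2 i ∈ S} := by
  set ρ := R.orderEmbOfFin hR
  set γ := S.orderEmbOfFin hS
  have hinj : Function.Injective fun xy : (Fin k → Fin r) × (Fin k → Fin r) =>
      (ρ ∘ xy.1, γ ∘ xy.2) :=
    ρ.injective.comp_left.prodMap γ.injective.comp_left
  rw [← card_image_of_injective _ hinj]
  congr 1
  ext ⟨x, y⟩
  simp only [mem_image, mem_copies, mem_filter, Prod.exists, Prod.mk.injEq]
  constructor
  · rintro ⟨a, b, ⟨ha, hb, h⟩, rfl, rfl⟩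
    exact ⟨⟨ρ.strictMono.comp ha, γ.strictMono.comp hb, h⟩,
      fun i => orderEmbOfFin_mem _ _ _, fun i => orderEmbOfFin_mem _ _ _⟩
  · rintro ⟨⟨hx, hy, h⟩, hxR, hyS⟩
    choose a ha using fun i => exists_orderEmbOfFin_eq hR (hxR i)
    choose b hb using fun i => exists_orderEmbOfFin_eq hS (hyS i)
    obtain rfl : x = ρ ∘ a := funext fun i => (ha i).symm
    obtain rfl : y = γ ∘ b := funext fun i => (hb i).symm
    exact ⟨a, b, ⟨fun s t hst => ρ.lt_iff_lt.1 (hx hst), fun s t hst => γ.lt_iff_lt.1 (hy hst), h⟩,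
      rfl, rfl⟩
    
lemma card_filter_ones_le_add_card_filter_copies (hR : #R = r) (hS : #S = r) {c : ℕ} (hk : 0 < k)
    {π : Equiv.Perm (Fin k)}
    (hc : ∀ n (M : Fin n → Fin n → Bool), copies π M = ∅ → #(ones M) ≤ c * n) :
    #{p ∈ ones M | {p.1} ⊆ R ∧ {p.2} ⊆ S}
      ≤ c * r + #{xy ∈ copies π M | univ.image xy.1 ⊆ R ∧ univ.image xy.2 ⊆ S} := by
  simp only [singleton_subset_iff, image_subset_iff, mem_univ, forall_const]
  rw [← card_ones_comp_orderEmbOfFin M hR hS, ← card_copies_comp_orderEmbOfFin M hR hS]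
  exact card_ones_le_add_card_copies hk hc _

end Sampling

lemma sum_sum_card_filter_subset {ι α : Type*} [Fintype α] [DecidableEq α] (s : Finset ι)
    (f g : ι → Finset α) {t : ℕ} (hf : ∀ i ∈ s, #(f i) = t) (hg : ∀ i ∈ s, #(g i) = t)
    (htr : t ≤ r) :
    ∑ R ∈ univ.powersetCard r, ∑ S ∈ univ.powersetCard r, #{i ∈ s | f i ⊆ R ∧ g i ⊆ S}
      = #s * (Fintype.card α - t).choose (r - t) ^ 2 := by
  have hcount (h : ι → Finset α) (hh : ∀ i ∈ s, #(h i) = t) (i : ι) (hi : i ∈ s) :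
      #{R ∈ univ.powersetCard r | h i ⊆ R} = (Fintype.card α - t).choose (r - t) := by
    rw [card_filter_powersetCard_subset _ _ _ (subset_univ _) ((hh i hi).trans_le htr), card_univ,
      hh i hi]
  calc _ = ∑ i ∈ s, ∑ R ∈ univ.powersetCard r, ∑ S ∈ univ.powersetCard r,
        (if f i ⊆ R then 1 else 0) * (if g i ⊆ S then 1 else 0) := by
        simp only [card_filter, ite_zero_mul_ite_zero, mul_one]
        rw [sum_congr rfl fun R _ => sum_comm, sum_comm]
    _ = ∑ i ∈ s, #{R ∈ univ.powersetCard r | f i ⊆ R} * #{S ∈ univ.powersetCard r | g i ⊆ S} := by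
        simp only [card_filter, sum_mul_sum]
    _ = #s * (Fintype.card α - t).choose (r - t) ^ 2 := by
        rw [sum_congr rfl fun i hi => by rw [hcount f hf i hi, hcount g hg i hi, ← sq], sum_const,
          smul_eq_mul]

lemma card_ones_mul_choose_sq_le (hk : 0 < k) {c : ℕ} {π : Equiv.Perm (Fin k)}
    (hc : ∀ n (M : Fin n → Fin n → Bool), copies π M = ∅ → #(ones M) ≤ c * n) (hkr : k ≤ r)
    (M : Fin n → Fin n → Bool) :
    #(ones M) * (n - 1).choose (r - 1) ^ 2
      ≤ n.choose r ^ 2 * (c * r) + #(copies π M) * (n - k).choose (r - k) ^ 2 := by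
  have hones := sum_sum_card_filter_subset (r := r) (t := 1) (ones M) (fun p => {p.1})
    (fun p => {p.2}) (by simp) (by simp) (by omega)
  have hcopies := sum_sum_card_filter_subset (r := r) (copies π M) (fun xy => univ.image xy.1)
    (fun xy => univ.image xy.2)
    (fun xy hxy => by simp [card_image_of_injective _ (mem_copies.1 hxy).1.injective])
    (fun xy hxy => by simp [card_image_of_injective _ (mem_copies.1 hxy).2.1.injective]) hkr
  rw [Fintype.card_fin] at hones hcopies
  calc #(ones M) * (n - 1).choose (r - 1) ^ 2
      = ∑ R ∈ univ.powersetCard r, ∑ S ∈ univ.powersetCard r,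
          #{p ∈ ones M | {p.1} ⊆ R ∧ {p.2} ⊆ S} := hones.symm
    _ ≤ ∑ R ∈ univ.powersetCard r, ∑ S ∈ univ.powersetCard r,
          (c * r + #{xy ∈ copies π M | univ.image xy.1 ⊆ R ∧ univ.image xy.2 ⊆ S}) :=
        sum_le_sum fun R hR => sum_le_sum fun S hS =>
          card_filter_ones_le_add_card_filter_copies M (mem_powersetCard.1 hR).2
            (mem_powersetCard.1 hS).2 hk hc
    _ = n.choose r ^ 2 * (c * r) + #(copies π M) * (n - k).choose (r - k) ^ 2 := by
        simp only [sum_add_distrib, sum_const, card_powersetCard, card_univ, Fintype.card_fin,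
          smul_eq_mul, hcopies]
        ring

lemma choose_mul_pow_le_choose_mul_pow (hrn : r ≤ n) (k : ℕ) :
    r.choose k * n ^ k ≤ n.choose k * r ^ k := by
  suffices r.descFactorial k * n ^ k ≤ n.descFactorial k * r ^ k by
    simp only [Nat.descFactorial_eq_factorial_mul_choose, mul_assoc] at this
    exact Nat.le_of_mul_le_mul_left this (Nat.factorial_pos k)
  induction k with
  | zero => simp
  | succ k ih =>
    have hstep : (r - k) * n ≤ (n - k) * r := by
      rw [Nat.sub_mul, Nat.sub_mul, mul_comm n r]
      exact Nat.sub_le_sub_left (Nat.mul_le_mul_left k hrn) _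
    calc r.descFactorial (k + 1) * n ^ (k + 1) = (r - k) * n * (r.descFactorial k * n ^ k) := by
          rw [Nat.descFactorial_succ, pow_succ]; ring
      _ ≤ (n - k) * r * (n.descFactorial k * r ^ k) := Nat.mul_le_mul hstep ih
      _ = n.descFactorial (k + 1) * r ^ (k + 1) := by rw [Nat.descFactorial_succ, pow_succ]; ring

lemma choose_sub_mul_pow_le (hkr : k ≤ r) (hrn : r ≤ n) :
    (n - k).choose (r - k) * n ^ k ≤ n.choose r * r ^ k := by
  refine Nat.le_of_mul_le_mul_left ?_ (Nat.choose_pos hkr)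
  calc r.choose k * ((n - k).choose (r - k) * n ^ k)
      = (n - k).choose (r - k) * (r.choose k * n ^ k) := by ring
    _ ≤ (n - k).choose (r - k) * (n.choose k * r ^ k) :=
        Nat.mul_le_mul_left _ (choose_mul_pow_le_choose_mul_pow hrn k)
    _ = r.choose k * (n.choose r * r ^ k) := by
        rw [← mul_assoc, mul_comm _ (n.choose k), ← Nat.choose_mul hkr]
        ring

lemma mul_pow_le_card_copies_mul_pow (hk : 0 < k) {c : ℕ} {π : Equiv.Perm (Fin k)}
    (hc : ∀ n (M : Fin n → Fin n → Bool), copies π M = ∅ → #(ones M) ≤ c * n) (hkr : k ≤ r)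
    (hrn : r ≤ n) (M : Fin n → Fin n → Bool) (hlow : 2 * c * n ^ 2 < #(ones M) * r) :
    c * n ^ (2 * k) ≤ #(copies π M) * r ^ (2 * k - 1) := by
  set B₀ := n.choose r
  set B₁ := (n - 1).choose (r - 1)
  set Bₖ := (n - k).choose (r - k)
  have hr : 0 < r := by omega
  have hB₀ : 0 < B₀ := Nat.choose_pos hrn
  have hBₖ : 0 < Bₖ := Nat.choose_pos (by omega)
  have hB₁ : n * B₁ = r * B₀ := by
    obtain ⟨n', rfl⟩ : ∃ n', n = n' + 1 := ⟨n - 1, by omega⟩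
    obtain ⟨r', rfl⟩ : ∃ r', r = r' + 1 := ⟨r - 1, by omega⟩
    simpa [B₀, B₁, mul_comm] using Nat.add_one_mul_choose_eq n' r'
  have hsample : #(ones M) * r ^ 2 * B₀ ^ 2 ≤ n ^ 2 * (B₀ ^ 2 * (c * r) + #(copies π M) * Bₖ ^ 2) :=
    calc #(ones M) * r ^ 2 * B₀ ^ 2 = n ^ 2 * (#(ones M) * B₁ ^ 2) := by
          rw [show #(ones M) * r ^ 2 * B₀ ^ 2 = #(ones M) * (r * B₀) ^ 2 by ring, ← hB₁]; ring
      _ ≤ _ := Nat.mul_le_mul_left _ (card_ones_mul_choose_sq_le hk hc hkr M)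
  have hlow' : 2 * c * n ^ 2 * (r * B₀ ^ 2) < #(ones M) * r * (r * B₀ ^ 2) :=
    Nat.mul_lt_mul_of_pos_right hlow (by positivity)
  have hsat : c * r * B₀ ^ 2 ≤ #(copies π M) * Bₖ ^ 2 := by
    have : n ^ 2 * (c * r * B₀ ^ 2) < n ^ 2 * (#(copies π M) * Bₖ ^ 2) := by nlinarith
    exact (Nat.lt_of_mul_lt_mul_left this).le
  have hpow : r ^ (2 * k) = r ^ (2 * k - 1) * r := by
    rw [← pow_succ, Nat.sub_add_cancel (by omega)]
  refine Nat.le_of_mul_le_mul_right ?_ (show 0 < r * Bₖ ^ 2 by positivity)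
  calc c * n ^ (2 * k) * (r * Bₖ ^ 2) = c * r * (Bₖ * n ^ k) ^ 2 := by rw [pow_mul']; ring
    _ ≤ c * r * (B₀ * r ^ k) ^ 2 :=
        Nat.mul_le_mul_left _ (Nat.pow_le_pow_left (choose_sub_mul_pow_le hkr hrn) 2)
    _ = c * r * B₀ ^ 2 * r ^ (2 * k) := by rw [pow_mul']; ring
    _ ≤ #(copies π M) * Bₖ ^ 2 * r ^ (2 * k) := by gcongr
    _ = #(copies π M) * r ^ (2 * k - 1) * (r * Bₖ ^ 2) := by rw [hpow]; ring

lemma exists_sample_size {c q : ℕ} (hk : 0 < k) (hkc : k ≤ c) (hkn : k ≤ n) (hq : q ≤ n * n)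
    (h : 4 * c * n < q) :
    ∃ r, k ≤ r ∧ r ≤ n ∧ 2 * c * n ^ 2 < q * r ∧ q * r ≤ 4 * c * n ^ 2 := by
  have hq0 : 0 < q := by omega
  have hdiv : q * (2 * c * n ^ 2 / q) ≤ 2 * c * n ^ 2 := Nat.mul_div_le _ _
  refine ⟨max k (2 * c * n ^ 2 / q + 1), le_max_left _ _, max_le hkn ?_, ?_, ?_⟩
  · have : 2 * c * n ^ 2 < q * n := by nlinarith
    have := Nat.div_lt_of_lt_mul this
    omega
  · calc 2 * c * n ^ 2 < q * (2 * c * n ^ 2 / q + 1) := Nat.lt_mul_div_succ _ hq0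
      _ ≤ q * max k (2 * c * n ^ 2 / q + 1) := Nat.mul_le_mul_left _ (le_max_right _ _)
  · rcases le_total k (2 * c * n ^ 2 / q + 1) with hle | hle
    · rw [max_eq_right hle]
      nlinarith
    · rw [max_eq_left hle]
      nlinarith

theorem supersaturation (hk : 0 < k) {c : ℕ} (hkc : k ≤ c) {π : Equiv.Perm (Fin k)}
    (hc : ∀ n (M : Fin n → Fin n → Bool), copies π M = ∅ → #(ones M) ≤ c * n)
    (M : Fin n → Fin n → Bool) :
    #(ones M) ≤ 4 * c * n ∨
      #(ones M) ^ (2 * k - 1) ≤ (4 * c) ^ (2 * k - 1) * (#(copies π M) * n ^ (2 * k - 2)) := by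
  rcases le_or_gt #(ones M) (4 * c * n) with hsmall | hbig
  · exact Or.inl hsmall
  right
  obtain ⟨xy, hxy⟩ : (copies π M).Nonempty := by
    refine nonempty_iff_ne_empty.2 fun h => ?_
    have := hc n M h
    nlinarith
  have hkn : k ≤ n := by simpa using Fintype.card_le_of_injective _ (mem_copies.1 hxy).1.injective
  have hn : 0 < n := by omega
  obtain ⟨r, hkr, hrn, hlow, hup⟩ := exists_sample_size hk hkc hkn (card_ones_le M) hbig
  have hcopies := mul_pow_le_card_copies_mul_pow hk hc hkr hrn M hlow
  have key : c * #(ones M) ^ (2 * k - 1) * n ^ (2 * k)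
      ≤ (4 * c) ^ (2 * k - 1) * (#(copies π M) * n ^ (2 * k - 2)) * n ^ (2 * k) :=
    calc c * #(ones M) ^ (2 * k - 1) * n ^ (2 * k)
        = c * n ^ (2 * k) * #(ones M) ^ (2 * k - 1) := by ring
      _ ≤ #(copies π M) * r ^ (2 * k - 1) * #(ones M) ^ (2 * k - 1) := by gcongr
      _ = #(copies π M) * (#(ones M) * r) ^ (2 * k - 1) := by ring
      _ ≤ #(copies π M) * (4 * c * n ^ 2) ^ (2 * k - 1) := by gcongr
      _ = (4 * c) ^ (2 * k - 1) * (#(copies π M) * n ^ (2 * k - 2)) * n ^ (2 * k) := by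
        rw [mul_pow, ← pow_mul, show 2 * (2 * k - 1) = 2 * k - 2 + 2 * k by omega, pow_add]
        ring
  calc #(ones M) ^ (2 * k - 1) ≤ c * #(ones M) ^ (2 * k - 1) := Nat.le_mul_of_pos_left _ (by omega)
    _ ≤ (4 * c) ^ (2 * k - 1) * (#(copies π M) * n ^ (2 * k - 2)) :=
      Nat.le_of_mul_le_mul_right key (by positivity)

noncomputable def fewCopies (π : Equiv.Perm (Fin k)) (m n : ℕ) : Finset (Fin n → Fin n → Bool) :=
  {M | #(copies π M) ≤ m}

section Counting

variable {φ : Fin n → Fin a}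

/-- A matrix with contraction `M₀` vanishes outside the blocks of the ones of `M₀`, which cover
at most `K ^ 2 * #(ones M₀)` entries. -/
lemma card_filter_contract_eq_le (hK : ∀ i, #{x | φ x = i} ≤ K) (M₀ : Fin a → Fin a → Bool)
    (s : Finset (Fin n → Fin n → Bool)) :
    #{M ∈ s | contract φ M = M₀} ≤ 2 ^ (K ^ 2 * #(ones M₀)) := by
  set Z : Finset (Fin n × Fin n) := {q | Prod.map φ φ q ∈ ones M₀}
  have hZ : #Z ≤ K ^ 2 * #(ones M₀) := by
    refine card_le_mul_card_image_of_maps_to (fun q hq => (mem_filter.1 hq).2) _ fun p _ => ?_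
    calc #{q ∈ Z | Prod.map φ φ q = p}
        ≤ #(({x | φ x = p.1} : Finset (Fin n)) ×ˢ ({y | φ y = p.2} : Finset (Fin n))) :=
          card_le_card fun q hq => by simp_all [Prod.ext_iff]
      _ ≤ K ^ 2 := by rw [card_product, sq]; exact Nat.mul_le_mul (hK _) (hK _)
  have hvanish (M : Fin n → Fin n → Bool) (hM : contract φ M = M₀) (q : Fin n × Fin n)
      (hq : q ∉ Z) : M q.1 q.2 = false := by
    by_contra hMq
    refine hq (mem_filter.2 ⟨mem_univ _, ?_⟩)
    rw [← hM, ones_contract]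
    exact mem_image_of_mem _ (mem_ones.2 (Bool.not_eq_false _ ▸ hMq))
  calc #{M ∈ s | contract φ M = M₀} ≤ #(univ : Finset (Z → Bool)) := by
        refine card_le_card_of_injOn (fun M z => M z.1.1 z.1.2) (fun _ _ => mem_coe.2 (mem_univ _))
          fun M hM M' hM' h => funext₂ fun x y => ?_
        by_cases hxy : (x, y) ∈ Z
        · exact congrFun h ⟨(x, y), hxy⟩
        · rw [hvanish M (mem_filter.1 hM).2 _ hxy, hvanish M' (mem_filter.1 hM').2 _ hxy]
    _ = 2 ^ #Z := by simp
    _ ≤ 2 ^ (K ^ 2 * #(ones M₀)) := Nat.pow_le_pow_right (by norm_num) hZ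

lemma card_fewCopies_le_sum (hφ : Monotone φ) (hK : ∀ i, #{x | φ x = i} ≤ K)
    (π : Equiv.Perm (Fin k)) (m : ℕ) :
    #(fewCopies π m n) ≤ ∑ M₀ ∈ fewCopies π m a, 2 ^ (K ^ 2 * #(ones M₀)) := by
  rw [card_eq_sum_card_fiberwise (f := contract φ) (t := fewCopies π m a) fun M hM => by
    simp only [fewCopies, coe_filter, Set.mem_ofPred_eq, mem_univ, true_and] at hM ⊢
    exact (card_copies_contract_le hφ π).trans hM]
  exact sum_le_sum fun M₀ _ => card_filter_contract_eq_le hK M₀ _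

end Counting

noncomputable def onesScale (k m n : ℕ) : ℝ :=
  n + ((m : ℝ) * (n : ℝ) ^ (2 * k - 2)) ^ ((1 : ℝ) / (2 * (k : ℝ) - 1))

lemma le_onesScale (k m n : ℕ) : (n : ℝ) ≤ onesScale k m n :=
  le_add_of_nonneg_right (by positivity)

lemma onesScale_nonneg (k m n : ℕ) : 0 ≤ onesScale k m n :=
  (Nat.cast_nonneg n).trans (le_onesScale k m n)

lemma one_div_two_mul_sub_one (hk : 0 < k) :
    (1 : ℝ) / (2 * (k : ℝ) - 1) = ((2 * k - 1 : ℕ) : ℝ)⁻¹ := by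
  rw [one_div, Nat.cast_sub (by omega)]
  push_cast
  rfl

lemma le_mul_rpow_inv_of_pow_le {x A X : ℝ} {e : ℕ} (he : e ≠ 0) (hx : 0 ≤ x) (hA : 0 ≤ A)
    (hX : 0 ≤ X) (h : x ^ e ≤ A ^ e * X) : x ≤ A * X ^ (e : ℝ)⁻¹ :=
  calc x = (x ^ e) ^ (e : ℝ)⁻¹ := (Real.pow_rpow_inv_natCast hx he).symm
    _ ≤ (A ^ e * X) ^ (e : ℝ)⁻¹ := Real.rpow_le_rpow (by positivity) h (by positivity)
    _ = A * X ^ (e : ℝ)⁻¹ := by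
        rw [Real.mul_rpow (by positivity) hX, Real.pow_rpow_inv_natCast hA he]

lemma card_ones_le_onesScale (hk : 0 < k) {c : ℕ} (hkc : k ≤ c) {π : Equiv.Perm (Fin k)}
    (hc : ∀ n (M : Fin n → Fin n → Bool), copies π M = ∅ → #(ones M) ≤ c * n) {m : ℕ}
    {M : Fin n → Fin n → Bool} (hM : #(copies π M) ≤ m) :
    (#(ones M) : ℝ) ≤ 4 * c * onesScale k m n := by
  set X : ℝ := (m : ℝ) * (n : ℝ) ^ (2 * k - 2)
  have hroot : 0 ≤ 4 * (c : ℝ) * X ^ ((1 : ℝ) / (2 * (k : ℝ) - 1)) := by positivity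
  rw [onesScale, mul_add]
  rcases supersaturation hk hkc hc M with h | h
  · have : (#(ones M) : ℝ) ≤ 4 * c * n := by exact_mod_cast h
    linarith
  · have hpow : (#(ones M) : ℝ) ^ (2 * k - 1) ≤ (4 * c) ^ (2 * k - 1) * X := by
      have hM' : (#(copies π M) : ℝ) ≤ m := by exact_mod_cast hM
      calc (#(ones M) : ℝ) ^ (2 * k - 1)
          ≤ (4 * c) ^ (2 * k - 1) * (#(copies π M) * n ^ (2 * k - 2)) := by exact_mod_cast h
        _ ≤ (4 * c) ^ (2 * k - 1) * X :=
          mul_le_mul_of_nonneg_left (mul_le_mul_of_nonneg_right hM' (by positivity)) (by positivity)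
    have := le_mul_rpow_inv_of_pow_le (by omega) (by positivity) (by positivity) (by positivity)
      hpow
    rw [← one_div_two_mul_sub_one hk] at this
    have : 0 ≤ 4 * (c : ℝ) * n := by positivity
    linarith

lemma three_quarters_pow_rpow_le (hk : 1 < k) :
    ((3 / 4 : ℝ) ^ (2 * k - 2)) ^ ((1 : ℝ) / (2 * (k : ℝ) - 1)) ≤ 7 / 8 := by
  have hk' : (2 : ℝ) ≤ k := by exact_mod_cast hk
  have hexp : (1 / 2 : ℝ) ≤ ((2 * k - 2 : ℕ) : ℝ) * (1 / (2 * (k : ℝ) - 1)) := by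
    rw [Nat.cast_sub (by omega), mul_one_div, le_div_iff₀ (by linarith)]
    push_cast
    linarith
  calc ((3 / 4 : ℝ) ^ (2 * k - 2)) ^ ((1 : ℝ) / (2 * (k : ℝ) - 1))
      = (3 / 4 : ℝ) ^ (((2 * k - 2 : ℕ) : ℝ) * (1 / (2 * (k : ℝ) - 1))) := by
        rw [← Real.rpow_natCast, ← Real.rpow_mul (by norm_num)]
    _ ≤ (3 / 4 : ℝ) ^ (1 / 2 : ℝ) :=
        Real.rpow_le_rpow_of_exponent_ge (by norm_num) (by norm_num) hexp
    _ ≤ ((7 / 8 : ℝ) ^ 2) ^ (1 / 2 : ℝ) :=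
        Real.rpow_le_rpow (by norm_num) (by norm_num) (by norm_num)
    _ = 7 / 8 := by
        rw [← Real.rpow_natCast, ← Real.rpow_mul (by norm_num)]
        norm_num

lemma onesScale_le (hk : 1 < k) (m : ℕ) {a n : ℕ} (h : 4 * a ≤ 3 * n) :
    onesScale k m a ≤ 7 / 8 * onesScale k m n := by
  set e : ℝ := (1 : ℝ) / (2 * (k : ℝ) - 1)
  have he : 0 ≤ e := div_nonneg zero_le_one (by linarith [(by exact_mod_cast hk : (1 : ℝ) < k)])
  have ha : (a : ℝ) ≤ 3 / 4 * n := by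
    have : ((4 * a : ℕ) : ℝ) ≤ ((3 * n : ℕ) : ℝ) := by exact_mod_cast h
    push_cast at this
    linarith
  have hroot : ((m : ℝ) * (a : ℝ) ^ (2 * k - 2)) ^ e
      ≤ 7 / 8 * ((m : ℝ) * (n : ℝ) ^ (2 * k - 2)) ^ e :=
    calc ((m : ℝ) * (a : ℝ) ^ (2 * k - 2)) ^ e
        ≤ ((3 / 4 : ℝ) ^ (2 * k - 2) * ((m : ℝ) * (n : ℝ) ^ (2 * k - 2))) ^ e := by
          refine Real.rpow_le_rpow (by positivity) ?_ he
          calc (m : ℝ) * (a : ℝ) ^ (2 * k - 2) ≤ m * (3 / 4 * n) ^ (2 * k - 2) := by gcongr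
            _ = _ := by ring
      _ = ((3 / 4 : ℝ) ^ (2 * k - 2)) ^ e * ((m : ℝ) * (n : ℝ) ^ (2 * k - 2)) ^ e :=
          Real.mul_rpow (by positivity) (by positivity)
      _ ≤ 7 / 8 * ((m : ℝ) * (n : ℝ) ^ (2 * k - 2)) ^ e := by
          gcongr
          exact three_quarters_pow_rpow_le hk
  simp only [onesScale]
  linarith

lemma two_pow_le_exp (j : ℕ) : (2 : ℝ) ^ j ≤ Real.exp j := by
  calc (2 : ℝ) ^ j ≤ Real.exp 1 ^ j := by
        gcongr
        linarith [Real.add_one_le_exp 1]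
    _ = Real.exp j := by rw [← Real.exp_nat_mul, mul_one]

lemma le_exp_of_recursion {N g : ℕ → ℝ} {h : ℕ → ℕ} {n₀ : ℕ} {C L θ : ℝ}
    (hbase : ∀ n < n₀, N n ≤ Real.exp (C * g n)) (hh : ∀ n, n₀ ≤ n → h n < n)
    (hstep : ∀ n, n₀ ≤ n → N n ≤ N (h n) * Real.exp (L * g (h n)))
    (hg : ∀ n, n₀ ≤ n → g (h n) ≤ θ * g n) (hg₀ : ∀ n, 0 ≤ g n) (hCL : 0 ≤ C + L)
    (hθ : (C + L) * θ ≤ C) (n : ℕ) : N n ≤ Real.exp (C * g n) := by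
  induction n using Nat.strong_induction_on with
  | _ n ih =>
  rcases lt_or_ge n n₀ with hn | hn
  · exact hbase n hn
  calc N n ≤ N (h n) * Real.exp (L * g (h n)) := hstep n hn
    _ ≤ Real.exp (C * g (h n)) * Real.exp (L * g (h n)) := by
        gcongr
        exact ih _ (hh n hn)
    _ = Real.exp ((C + L) * g (h n)) := by rw [← Real.exp_add, add_mul]
    _ ≤ Real.exp (C * g n) := Real.exp_le_exp.2 <| by
        calc (C + L) * g (h n) ≤ (C + L) * (θ * g n) := by gcongr; exact hg n hn
          _ = (C + L) * θ * g n := by ring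
          _ ≤ C * g n := by gcongr; exact hg₀ n

lemma card_fewCopies_le_two_pow (π : Equiv.Perm (Fin k)) (m n : ℕ) :
    #(fewCopies π m n) ≤ 2 ^ (n * n) :=
  (card_le_univ _).trans_eq (by simp [← pow_mul])

lemma card_fewCopies_le_exp_of_lt_four (π : Equiv.Perm (Fin k)) (m : ℕ) {C : ℝ} (hC : 3 ≤ C)
    (hn : n < 4) : (#(fewCopies π m n) : ℝ) ≤ Real.exp (C * onesScale k m n) := by
  have hsq : ((n * n : ℕ) : ℝ) ≤ C * onesScale k m n := by
    have h₁ : ((n * n : ℕ) : ℝ) ≤ 3 * n := by exact_mod_cast Nat.mul_le_mul_right n (by omega)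
    nlinarith [le_onesScale k m n, onesScale_nonneg k m n]
  calc (#(fewCopies π m n) : ℝ) ≤ 2 ^ (n * n) := by exact_mod_cast card_fewCopies_le_two_pow π m n
    _ ≤ Real.exp (n * n : ℕ) := two_pow_le_exp _
    _ ≤ _ := Real.exp_le_exp.2 hsq

lemma card_fewCopies_le_mul_exp (hk : 0 < k) {c : ℕ} (hkc : k ≤ c) {π : Equiv.Perm (Fin k)}
    (hc : ∀ n (M : Fin n → Fin n → Bool), copies π M = ∅ → #(ones M) ≤ c * n) (m n : ℕ) :
    (#(fewCopies π m n) : ℝ)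
      ≤ #(fewCopies π m (n / 2 + 1)) * Real.exp (16 * c * onesScale k m (n / 2 + 1)) := by
  have hsum := card_fewCopies_le_sum (blockIndex_monotone (K := 2) (n := n))
    (card_blockIndex_fiber_le two_pos) π m
  calc (#(fewCopies π m n) : ℝ)
      ≤ ∑ M₀ ∈ fewCopies π m (n / 2 + 1), (2 : ℝ) ^ (2 ^ 2 * #(ones M₀)) := by exact_mod_cast hsum
    _ ≤ ∑ _M₀ ∈ fewCopies π m (n / 2 + 1), Real.exp (16 * c * onesScale k m (n / 2 + 1)) := by
        refine sum_le_sum fun M₀ hM₀ => (two_pow_le_exp _).trans (Real.exp_le_exp.2 ?_)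
        have := card_ones_le_onesScale hk hkc hc (mem_filter.1 hM₀).2
        push_cast
        linarith
    _ = _ := by rw [sum_const, nsmul_eq_mul]

lemma natCard_eq_card_fewCopies (π : Equiv.Perm (Fin k)) (m n : ℕ) :
    Nat.card {M : Fin n → Fin n → Bool // matCopies π M ≤ m} = #(fewCopies π m n) := by
  simp only [matCopies_eq_card_copies]
  rw [Nat.card_eq_fintype_card, Fintype.card_subtype]
  rfl

end FewCopies

open FewCopies in
/-- The number of `n × n` 0-1 matrices with at most `m` copies of `A_π` is at
most `exp(C · (n + (m · n^(2k-2))^(1/(2k-1))))`. -/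
theorem count_matrices_few_copies (k : ℕ) (hk : 1 < k) (π : Equiv.Perm (Fin k)) :
    ∃ C : ℝ, ∀ m n : ℕ,
      (Nat.card {M : Fin n → Fin n → Bool // matCopies π M ≤ m} : ℝ) ≤
        Real.exp (C * ((n : ℝ) +
          ((m : ℝ) * (n : ℝ) ^ (2 * k - 2)) ^ ((1 : ℝ) / (2 * (k : ℝ) - 1)))) := by
  obtain ⟨c, hkc, hc⟩ := marcus_tardos hk π
  -- One halving step costs `exp (16 c · onesScale)`, which shrinks by `7 / 8` per halving; the
  -- recursion closes once `C ≥ 7 · 16 c`, and `C ≥ 3` covers the matrices of size below `4`.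
  refine ⟨112 * c + 3, fun m n => ?_⟩
  rw [natCard_eq_card_fewCopies]
  exact le_exp_of_recursion (N := fun n => (#(fewCopies π m n) : ℝ)) (g := onesScale k m)
    (n₀ := 4) (L := 16 * c) (θ := 7 / 8)
    (fun n hn => card_fewCopies_le_exp_of_lt_four π m (by linarith) hn) (fun n hn => by omega)
    (fun n _ => card_fewCopies_le_mul_exp (by omega) hkc hc m n)
    (fun n hn => onesScale_le hk m (by omega)) (onesScale_nonneg k m) (by positivity)
    (by linarith) n
end

section
/- Let M be an n×n 0-1 matrix with n even, and let M' be the (n/2)×(n/2) 0-1 matrix (the 2-contraction of M) defined by M'[i][j] = 0 if and only if M[2i-1][2j-1] = M[2i-1][2j] = M[2i][2j-1] = M[2i][2j] = 0. Then for every permutation π of {1,...,k}, the number of copies of A_π in M is at least the number of copies of A_π in M'. -/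
/-- If `M'` is the 2-contraction of the `2m × 2m` 0-1 matrix `M` (an entry of `M'`
is `0` iff all four corresponding entries of `M` are `0`; here in 0-indexed form,
row `i'` of `M` corresponds to row `i'/2` of `M'` and similarly for columns),
then `M` contains at least as many copies of `A_π` as `M'` does. -/
theorem two_contraction_copies (k m : ℕ) (π : Equiv.Perm (Fin k))
    (M : Fin (2 * m) → Fin (2 * m) → Bool) (M' : Fin m → Fin m → Bool)
    (hM' : ∀ i j : Fin m, M' i j = false ↔
      ∀ i' j' : Fin (2 * m), i'.val / 2 = i.val → j'.val / 2 = j.val →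
        M i' j' = false) :
    matCopies π M' ≤ matCopies π M := by
  classical
  have key : ∀ (i j : Fin m), M' i j = true →
      ∃ i' : Fin (2 * m), ∃ j' : Fin (2 * m),
        i'.val / 2 = i.val ∧ j'.val / 2 = j.val ∧ M i' j' = true := by
    intro i j h
    by_contra hc
    push_neg at hc
    have hfalse : M' i j = false := (hM' i j).mpr (by
      intro i' j' hi hj
      exact Bool.eq_false_iff.mpr (hc i' j' hi hj))
    rw [hfalse] at h
    exact Bool.false_ne_true h
  set T := {xy : (Fin k → Fin (2 * m)) × (Fin k → Fin (2 * m)) //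
    StrictMono xy.1 ∧ StrictMono xy.2 ∧ ∀ i, M (xy.1 i) (xy.2 (π i)) = true}
  set S := {xy : (Fin k → Fin m) × (Fin k → Fin m) //
    StrictMono xy.1 ∧ StrictMono xy.2 ∧ ∀ i, M' (xy.1 i) (xy.2 (π i)) = true}
  -- build the map
  have build : ∀ s : S, ∃ t : T,
      (∀ i, (t.1.1 i).val / 2 = (s.1.1 i).val) ∧
      (∀ j, (t.1.2 j).val / 2 = (s.1.2 j).val) := by
    intro ⟨⟨x, y⟩, hx, hy, hxy⟩
    choose X J hX hJ hMXJ using fun i => key (x i) (y (π i)) (hxy i)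
    refine ⟨⟨⟨X, fun j => J (π.symm j)⟩, ?_, ?_, ?_⟩, fun i => hX i, fun j => ?_⟩
    · intro a b hab
      have : (X a).val / 2 < (X b).val / 2 := by
        rw [hX a, hX b]; exact hx hab
      exact Nat.lt_of_div_lt_div this
    · intro a b hab
      have : (J (π.symm a)).val / 2 < (J (π.symm b)).val / 2 := by
        rw [hJ, hJ]
        simp only [Equiv.apply_symm_apply]
        exact hy hab
      exact Nat.lt_of_div_lt_div this
    · intro i
      simpa using hMXJ i
    · have := hJ (π.symm j)
      simpa using this
  choose F hF1 hF2 using build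
  have hinj : Function.Injective F := by
    intro s t hst
    have hx : ∀ i, (s.1.1 i).val = (t.1.1 i).val := by
      intro i
      rw [← hF1 s i, ← hF1 t i, hst]
    have hy : ∀ j, (s.1.2 j).val = (t.1.2 j).val := by
      intro j
      rw [← hF2 s j, ← hF2 t j, hst]
    apply Subtype.ext
    ext i
    · exact hx i
    · exact hy i
  exact Nat.card_le_card_of_injective F hinj
end

section
/- Let k ≥ 2 and let π be a permutation of {1,...,k} with π(1) > π(k). Let n and a be positive integers with n | a and a | n². Let M be the n×n 0-1 matrix that is 1 exactly on the (n²/a) diagonal blocks of side length a/n (that is, M[i][j] = 1 iff ⌈i/(a/n)⌉ = ⌈j/(a/n)⌉), so M has exactly a ones. Then M contains at most a^(2k-1)/n^(2k-2) copies of A_π. -/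
/-- If `π(1) > π(k)`, `n ∣ a` and `a ∣ n²`, the `n × n` 0-1 matrix which is `1`
exactly on the `n²/a` diagonal blocks of side length `a/n` (in 0-indexed form:
`M i j = 1` iff `i / (a/n) = j / (a/n)`, which has exactly `a` ones) contains at
most `a^(2k-1) / n^(2k-2)` copies of `A_π`. -/
theorem diagonal_block_matrix_few_copies (k : ℕ) (hk : 2 ≤ k) (π : Equiv.Perm (Fin k))
    (hπ : π ⟨k - 1, by omega⟩ < π ⟨0, by omega⟩)
    (n a : ℕ) (hn : 0 < n) (ha : 0 < a) (hna : n ∣ a) (han : a ∣ n ^ 2) :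
    (matCopies π (fun i j : Fin n => decide (i.val / (a / n) = j.val / (a / n))) : ℝ) ≤
      (a : ℝ) ^ (2 * k - 1) / (n : ℝ) ^ (2 * k - 2) := by
  classical
  set s := a / n with hs_def
  set b := n / s with hb_def
  have hsn : s * n = a := Nat.div_mul_cancel hna
  have hs : 0 < s := Nat.div_pos (Nat.le_of_dvd ha hna) hn
  have hsd : s ∣ n := by
    have h : s * n ∣ n * n := by rw [hsn]; simpa [pow_two] using han
    exact (Nat.mul_dvd_mul_iff_right hn).mp h
  have hbs : b * s = n := Nat.div_mul_cancel hsd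
  -- the key counting bound
  have hcard : matCopies π (fun i j : Fin n => decide (i.val / s = j.val / s))
      ≤ b * (s ^ k * s ^ k) := by
    rw [matCopies]
    have key : ∀ (xy : (Fin k → Fin n) × (Fin k → Fin n)),
        StrictMono xy.1 → StrictMono xy.2 →
        (∀ i, (decide ((xy.1 i).val / s = (xy.2 (π i)).val / s)) = true) →
        ∀ i : Fin k, (xy.1 i).val / s = (xy.1 ⟨0, by omega⟩).val / s ∧
          (xy.2 i).val / s = (xy.1 ⟨0, by omega⟩).val / s := by
      rintro ⟨x, y⟩ hx hy hM
      simp only [decide_eq_true_eq] at hM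
      have hx0 : ∀ i : Fin k, (x ⟨0, by omega⟩).val ≤ (x i).val := by
        intro i
        exact hx.monotone (by simp [Fin.le_def])
      have hxk : ∀ i : Fin k, (x i).val ≤ (x ⟨k - 1, by omega⟩).val := by
        intro i
        exact hx.monotone (by simp [Fin.le_def]; omega)
      have hylt : (y (π ⟨k - 1, by omega⟩)).val ≤ (y (π ⟨0, by omega⟩)).val :=
        (hy.monotone hπ.le)
      have h1 : (x ⟨0, by omega⟩).val / s = (y (π ⟨0, by omega⟩)).val / s := hM _
      have h2 : (x ⟨k - 1, by omega⟩).val / s = (y (π ⟨k - 1, by omega⟩)).val / s := hM _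
      have hchain : (x ⟨k - 1, by omega⟩).val / s = (x ⟨0, by omega⟩).val / s := by
        have a1 : (x ⟨0, by omega⟩).val / s ≤ (x ⟨k - 1, by omega⟩).val / s :=
          Nat.div_le_div_right (hx0 _)
        have a2 : (y (π ⟨k - 1, by omega⟩)).val / s ≤ (y (π ⟨0, by omega⟩)).val / s :=
          Nat.div_le_div_right hylt
        omega
      have hxall : ∀ i : Fin k, (x i).val / s = (x ⟨0, by omega⟩).val / s := by
        intro i
        have a1 : (x ⟨0, by omega⟩).val / s ≤ (x i).val / s :=
          Nat.div_le_div_right (hx0 i)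
        have a2 : (x i).val / s ≤ (x ⟨k - 1, by omega⟩).val / s :=
          Nat.div_le_div_right (hxk i)
        omega
      intro i
      refine ⟨hxall i, ?_⟩
      have := hM (π.symm i)
      rw [Equiv.apply_symm_apply] at this
      rw [← this]
      exact hxall _
    set T := {xy : (Fin k → Fin n) × (Fin k → Fin n) //
      StrictMono xy.1 ∧ StrictMono xy.2 ∧
        ∀ i, (fun i j : Fin n => decide (i.val / s = j.val / s)) (xy.1 i) (xy.2 (π i)) = true}
    have hB : ∀ p : T, (p.1.1 ⟨0, by omega⟩).val / s < b := by
      intro p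
      rw [Nat.div_lt_iff_lt_mul hs, mul_comm b s, mul_comm s b, hbs]
      exact (p.1.1 _).isLt
    let f : T → Fin b × (Fin k → Fin s) × (Fin k → Fin s) := fun p =>
      (⟨(p.1.1 ⟨0, by omega⟩).val / s, hB p⟩,
        fun i => ⟨(p.1.1 i).val % s, Nat.mod_lt _ hs⟩,
        fun i => ⟨(p.1.2 i).val % s, Nat.mod_lt _ hs⟩)
    have hf : Function.Injective f := by
      rintro ⟨⟨x1, y1⟩, hx1, hy1, hM1⟩ ⟨⟨x2, y2⟩, hx2, hy2, hM2⟩ heq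
      have k1 := key (x1, y1) hx1 hy1 hM1
      have k2 := key (x2, y2) hx2 hy2 hM2
      simp only [f, Prod.mk.injEq, Fin.mk.injEq, funext_iff] at heq
      obtain ⟨hBeq, hxm, hym⟩ := heq
      have hx : x1 = x2 := by
        funext i
        have e1 := (k1 i).1
        have e2 := (k2 i).1
        have := hxm i
        have hd : (x1 i).val / s = (x2 i).val / s := e1.trans (hBeq.trans e2.symm)
        have d1 := Nat.div_add_mod (x1 i).val s
        have d2 := Nat.div_add_mod (x2 i).val s
        refine Fin.ext ?_
        rw [← d1, ← d2, hd, this]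
      have hy : y1 = y2 := by
        funext i
        have e1 := (k1 i).2
        have e2 := (k2 i).2
        have := hym i
        have hd : (y1 i).val / s = (y2 i).val / s := e1.trans (hBeq.trans e2.symm)
        have d1 := Nat.div_add_mod (y1 i).val s
        have d2 := Nat.div_add_mod (y2 i).val s
        refine Fin.ext ?_
        rw [← d1, ← d2, hd, this]
      simp [Prod.ext_iff, hx, hy]
    calc Nat.card T ≤ Nat.card (Fin b × (Fin k → Fin s) × (Fin k → Fin s)) :=
          Nat.card_le_card_of_injective f hf
      _ = b * (s ^ k * s ^ k) := by
          simp [Nat.card_eq_fintype_card]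
  -- arithmetic
  have hfin : (b * (s ^ k * s ^ k)) * n ^ (2 * k - 2) = a ^ (2 * k - 1) := by
    obtain ⟨m, hm⟩ : ∃ m, 2 * k - 2 = m := ⟨2 * k - 2, rfl⟩
    have hm1 : 2 * k - 1 = m + 1 := by omega
    have hkk : k + k = m + 2 := by omega
    rw [hm, hm1, ← hsn, mul_pow, ← hbs]
    calc b * (s ^ k * s ^ k) * (b * s) ^ m
        = b ^ (m + 1) * s ^ (k + k + m) := by ring
      _ = b ^ (m + 1) * s ^ (m + 2 + m) := by rw [hkk]
      _ = s ^ (m + 1) * (b * s) ^ (m + 1) := by ring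
  rw [le_div_iff₀ (by positivity)]
  calc (matCopies π (fun i j : Fin n => decide (i.val / s = j.val / s)) : ℝ) * (n : ℝ) ^ (2 * k - 2)
      ≤ ((b * (s ^ k * s ^ k)) : ℕ) * (n : ℝ) ^ (2 * k - 2) := by
        have : ((matCopies π (fun i j : Fin n => decide (i.val / s = j.val / s)) : ℕ) : ℝ)
            ≤ ((b * (s ^ k * s ^ k) : ℕ) : ℝ) := by exact_mod_cast hcard
        gcongr
    _ = ((b * (s ^ k * s ^ k) * n ^ (2 * k - 2) : ℕ) : ℝ) := by push_cast; ring
    _ = (a : ℝ) ^ (2 * k - 1) := by rw [hfin]; push_cast; ring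
end

section
/- Let k ≥ 2, let π be a permutation of {1,...,k} with π(1) < π(k), and let n be an even positive integer with n ≥ 2k. Let Λ* be the k-uniform hypergraph on vertex set {1,...,n} whose edges are exactly those k-element subsets of {1,...,n} that are contained neither in {1,...,n/2} nor in {n/2+1,...,n}. Then Λ* has exactly C(n,k) − 2·C(n/2,k) edges, and the number of permutations σ of {1,...,n} that Λ*-avoid π is at least ((n/2)!)². In particular, every permutation σ such that σ maps {1,...,n/2} onto {n/2+1,...,n} and maps {n/2+1,...,n} onto {1,...,n/2} Λ*-avoids π. -/
/-- `σ` `Λ`-avoids `π`, where `Λ` is a hypergraph on `{1,…,n}` given as a finite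
set of edges: there is no copy of `π` in `σ` whose index set is an edge of `Λ`. -/
def LambdaAvoids {k n : ℕ} (π : Equiv.Perm (Fin k))
    (Λ : Finset (Finset (Fin n))) (σ : Equiv.Perm (Fin n)) : Prop :=
  ¬ ∃ x : Fin k → Fin n,
      StrictMono x ∧ (∀ i j, π i < π j ↔ σ (x i) < σ (x j)) ∧
      Finset.image x Finset.univ ∈ Λ

/-- The bipartite-type `k`-uniform hypergraph `Λ*` on `{1,…,2m}` whose edges are
exactly the `k`-element subsets contained neither in the first half
`{1,…,m}` nor in the second half `{m+1,…,2m}`. -/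
def multipartiteHypergraph (m k : ℕ) : Finset (Finset (Fin (2 * m))) :=
  Finset.univ.filter (fun s : Finset (Fin (2 * m)) =>
    s.card = k ∧ ¬ (∀ i ∈ s, (i : ℕ) < m) ∧ ¬ (∀ i ∈ s, m ≤ (i : ℕ)))

noncomputable def halfEquiv (m : ℕ) : Fin (2 * m) ≃ (Fin m ⊕ Fin m) :=
  (finCongr (two_mul m)).trans finSumFinEquiv.symm

noncomputable def halfSwap (m : ℕ) (a b : Equiv.Perm (Fin m)) : Equiv.Perm (Fin (2 * m)) :=
  ((halfEquiv m).trans (((Equiv.sumCongr a b).trans (Equiv.sumComm _ _)))).trans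
    (halfEquiv m).symm

lemma halfEquiv_symm_inl (m : ℕ) (j : Fin m) :
    (((halfEquiv m).symm (Sum.inl j) : Fin (2 * m)) : ℕ) = (j : ℕ) := by
  simp [halfEquiv]

lemma halfEquiv_symm_inr (m : ℕ) (j : Fin m) :
    (((halfEquiv m).symm (Sum.inr j) : Fin (2 * m)) : ℕ) = m + (j : ℕ) := by
  simp [halfEquiv]; omega

lemma halfEquiv_apply_lt (m : ℕ) (i : Fin (2 * m)) (h : (i : ℕ) < m) :
    halfEquiv m i = Sum.inl ⟨i, h⟩ := by
  apply (halfEquiv m).symm.injective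
  simp only [Equiv.symm_apply_apply]
  apply Fin.val_injective
  simp [halfEquiv_symm_inl]

lemma halfEquiv_apply_ge (m : ℕ) (i : Fin (2 * m)) (h : m ≤ (i : ℕ)) :
    halfEquiv m i = Sum.inr ⟨(i : ℕ) - m, by omega⟩ := by
  apply (halfEquiv m).symm.injective
  simp only [Equiv.symm_apply_apply]
  apply Fin.val_injective
  rw [halfEquiv_symm_inr]
  simp; omega

lemma halfSwap_val_lt (m : ℕ) (a b : Equiv.Perm (Fin m)) (i : Fin (2 * m))
    (h : (i : ℕ) < m) : ((halfSwap m a b i : Fin (2 * m)) : ℕ) = m + (a ⟨i, h⟩ : ℕ) := by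
  simp [halfSwap, halfEquiv_apply_lt m i h, halfEquiv_symm_inr]

lemma halfSwap_val_ge (m : ℕ) (a b : Equiv.Perm (Fin m)) (i : Fin (2 * m))
    (h : m ≤ (i : ℕ)) :
    ((halfSwap m a b i : Fin (2 * m)) : ℕ) = (b ⟨(i : ℕ) - m, by omega⟩ : ℕ) := by
  simp [halfSwap, halfEquiv_apply_ge m i h, halfEquiv_symm_inl]

lemma halfSwap_injective (m : ℕ) :
    Function.Injective (fun p : Equiv.Perm (Fin m) × Equiv.Perm (Fin m) =>
      halfSwap m p.1 p.2) := by
  rintro ⟨a, b⟩ ⟨a', b'⟩ h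
  have h' : halfSwap m a b = halfSwap m a' b' := h
  simp only [Prod.mk.injEq]
  constructor
  · ext j
    have h1 := halfSwap_val_lt m a b ⟨(j : ℕ), by omega⟩ (by simpa using j.isLt)
    have h2 := halfSwap_val_lt m a' b' ⟨(j : ℕ), by omega⟩ (by simpa using j.isLt)
    rw [h'] at h1
    rw [h1] at h2
    simp at h2
    omega
  · ext j
    have hlt : m + (j : ℕ) < 2 * m := by omega
    have h1 := halfSwap_val_ge m a b ⟨m + (j : ℕ), hlt⟩ (by simp)
    have h2 := halfSwap_val_ge m a' b' ⟨m + (j : ℕ), hlt⟩ (by simp)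
    rw [h'] at h1
    rw [h1] at h2
    simp at h2
    omega


/-- For `π` with `π(1) < π(k)` and `n = 2m ≥ 2k`: the hypergraph `Λ*` has exactly
`C(n,k) - 2·C(n/2,k)` edges; the number of permutations `Λ*`-avoiding `π` is at
least `((n/2)!)²`; and every permutation exchanging the two halves of
`{1,…,n}` `Λ*`-avoids `π`. -/
theorem multipartite_hypergraph_avoidance (k m : ℕ) (hk : 2 ≤ k) (hm : k ≤ m)
    (π : Equiv.Perm (Fin k)) (hπ : π ⟨0, by omega⟩ < π ⟨k - 1, by omega⟩) :
    (multipartiteHypergraph m k).card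
        = Nat.choose (2 * m) k - 2 * Nat.choose m k ∧
    Nat.factorial m ^ 2 ≤
      Nat.card {σ : Equiv.Perm (Fin (2 * m)) //
        LambdaAvoids π (multipartiteHypergraph m k) σ} ∧
    ∀ σ : Equiv.Perm (Fin (2 * m)),
      (∀ i : Fin (2 * m), (i : ℕ) < m ↔ m ≤ ((σ i : Fin (2 * m)) : ℕ)) →
      LambdaAvoids π (multipartiteHypergraph m k) σ := by
  -- Part 3
  have h3 : ∀ σ : Equiv.Perm (Fin (2 * m)),
      (∀ i : Fin (2 * m), (i : ℕ) < m ↔ m ≤ ((σ i : Fin (2 * m)) : ℕ)) →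
      LambdaAvoids π (multipartiteHypergraph m k) σ := by
    intro σ hσ
    rintro ⟨x, hmono, hcopy, hedge⟩
    simp only [multipartiteHypergraph, Finset.mem_filter, Finset.mem_univ, true_and,
      not_forall, Finset.mem_image] at hedge
    obtain ⟨-, ⟨u, ⟨i, -, rfl⟩, hu⟩, ⟨v, ⟨j, -, rfl⟩, hv⟩⟩ := hedge
    push_neg at hu
    have h0 : (x ⟨0, by omega⟩ : ℕ) < m := by
      have := hmono.monotone (show (⟨0, by omega⟩ : Fin k) ≤ j from Fin.mk_le_of_le_val
        (by omega))
      omega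
    have hl : m ≤ (x ⟨k - 1, by omega⟩ : ℕ) := by
      have := hmono.monotone (show i ≤ (⟨k - 1, by omega⟩ : Fin k) from
        Fin.le_def.mpr (by simp; omega))
      omega
    have hA : m ≤ (σ (x ⟨0, by omega⟩) : ℕ) := (hσ _).mp h0
    have hB : ¬ m ≤ (σ (x ⟨k - 1, by omega⟩) : ℕ) := by
      intro hc
      have := (hσ (x ⟨k - 1, by omega⟩)).mpr hc
      omega
    have := (hcopy ⟨0, by omega⟩ ⟨k - 1, by omega⟩).mp hπ
    rw [Fin.lt_def] at this
    omega
  refine ⟨?_, ?_, h3⟩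
  · -- cardinality
    classical
    set H₁ : Finset (Fin (2 * m)) := Finset.univ.filter (fun i => (i : ℕ) < m) with hH1
    set H₂ : Finset (Fin (2 * m)) := Finset.univ.filter (fun i => m ≤ (i : ℕ)) with hH2
    have hcard1 : H₁.card = m := by
      have : H₁ = Finset.map ⟨Fin.castLE (by omega), Fin.castLE_injective _⟩
          (Finset.univ : Finset (Fin m)) := by
        ext i
        simp only [hH1, Finset.mem_filter, Finset.mem_univ, true_and, Finset.mem_map,
          Function.Embedding.coeFn_mk]
        constructor
        · intro h; exact ⟨⟨i, h⟩, by apply Fin.val_injective; simp⟩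
        · rintro ⟨j, -, rfl⟩; simp
      rw [this]; simp
    have hcard2 : H₂.card = m := by
      have : H₂ = H₁ᶜ := by
        ext i; simp [hH1, hH2, not_lt]
      rw [this, Finset.card_compl, hcard1]
      simp; omega
    have key : multipartiteHypergraph m k =
        Finset.powersetCard k (Finset.univ : Finset (Fin (2 * m))) \
          (Finset.powersetCard k H₁ ∪ Finset.powersetCard k H₂) := by
      ext s
      simp only [multipartiteHypergraph, Finset.mem_filter, Finset.mem_univ, true_and,
        Finset.mem_sdiff, Finset.mem_union, Finset.mem_powersetCard, Finset.subset_univ,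
        Finset.subset_iff, hH1, hH2, Finset.mem_filter]
      tauto
    rw [key, Finset.card_sdiff_of_subset]
    · rw [Finset.card_union_of_disjoint, Finset.card_powersetCard, Finset.card_powersetCard,
        Finset.card_powersetCard, hcard1, hcard2, Finset.card_univ, Fintype.card_fin]
      · ring
      · rw [Finset.disjoint_left]
        intro s hs1 hs2
        simp only [Finset.mem_powersetCard, hH1, hH2, Finset.subset_iff, Finset.mem_filter,
          Finset.mem_univ, true_and] at hs1 hs2
        obtain ⟨hs1a, hs1b⟩ := hs1
        obtain ⟨hs2a, -⟩ := hs2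
        have : s.Nonempty := Finset.card_pos.mp (by omega)
        obtain ⟨i, hi⟩ := this
        have := hs1a hi
        have := hs2a hi
        omega
    · intro s hs
      simp only [Finset.mem_union, Finset.mem_powersetCard] at hs ⊢
      rcases hs with h | h <;> exact ⟨Finset.subset_univ _, h.2⟩
  · -- counting
    have hf : Function.Injective
        (fun p : Equiv.Perm (Fin m) × Equiv.Perm (Fin m) =>
          (⟨halfSwap m p.1 p.2, h3 _ (by
            intro i
            constructor
            · intro h
              rw [halfSwap_val_lt m p.1 p.2 i h]; omega
            · intro h
              by_contra hc
              push_neg at hc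
              rw [halfSwap_val_ge m p.1 p.2 i hc] at h
              have := (p.2 ⟨(i : ℕ) - m, by omega⟩).isLt
              omega)⟩ :
            {σ : Equiv.Perm (Fin (2 * m)) //
              LambdaAvoids π (multipartiteHypergraph m k) σ})) := by
      intro p q h
      exact halfSwap_injective m (by simpa [Subtype.ext_iff] using h)
    calc Nat.factorial m ^ 2
        = Nat.card (Equiv.Perm (Fin m) × Equiv.Perm (Fin m)) := by
          simp [Nat.card_eq_fintype_card, sq, Fintype.card_perm, Fintype.card_fin]
      _ ≤ _ := Nat.card_le_card_of_injective _ hf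
end

section
/- Let k be an integer with k > 1 and π a permutation of {1,...,k}. There exists a constant C = C(π) such that for every positive integer n, the number of n×n 0-1 matrices containing no copy of the permutation matrix A_π is at most exp(Cn). -/
lemma exists_le_pow_le_mul {B n : ℕ} (hB : 1 < B) (hn : 0 < n) :
    ∃ m, n ≤ B ^ m ∧ B ^ m ≤ B * n :=
  ⟨Nat.log B n + 1, (Nat.lt_pow_succ_log_self hB n).le, by
    rw [pow_succ, mul_comm]; exact Nat.mul_le_mul_left B (Nat.pow_log_le_self B hn.ne')⟩

lemma le_mul_of_le_pred_mul_add {g : ℕ → ℕ} {B D : ℕ} (hB : 1 < B) (hg : Monotone g)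
    (h1 : g 1 ≤ D) (hstep : ∀ n, g (B * n) ≤ (B - 1) * g n + D * n) :
    ∀ n, 0 < n → g n ≤ D * B * n := by
  have hpow : ∀ m, g (B ^ m) ≤ D * B ^ m := by
    intro m
    induction m with
    | zero => simpa using h1
    | succ m ih =>
      calc g (B ^ (m + 1)) = g (B * B ^ m) := by rw [pow_succ']
        _ ≤ (B - 1) * (D * B ^ m) + D * B ^ m := by
          grw [hstep, ih]
        _ = D * B ^ (m + 1) := by
          obtain ⟨b, rfl⟩ : ∃ b, B = b + 1 := ⟨B - 1, by omega⟩
          simp only [Nat.add_sub_cancel]; ring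
  intro n hn
  obtain ⟨m, hnm, hmn⟩ := exists_le_pow_le_mul hB hn
  calc g n ≤ g (B ^ m) := hg hnm
    _ ≤ D * B ^ m := hpow m
    _ ≤ D * B * n := by rw [mul_assoc]; exact Nat.mul_le_mul_left D hmn

lemma le_two_pow_of_le_two_pow_mul {f : ℕ → ℕ} {a : ℕ} (hf : Monotone f) (h1 : f 1 ≤ 2)
    (hstep : ∀ n, f (2 * n) ≤ 2 ^ (a * n) * f n) :
    ∀ n, 0 < n → f n ≤ 2 ^ ((2 * a + 1) * n) := by
  have hpow : ∀ j, f (2 ^ j) ≤ 2 ^ (a * 2 ^ j + 1) := by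
    intro j
    induction j with
    | zero => simpa using h1.trans (Nat.le_self_pow (by omega) 2)
    | succ j ih =>
      calc f (2 ^ (j + 1)) = f (2 * 2 ^ j) := by rw [pow_succ']
        _ ≤ 2 ^ (a * 2 ^ j) * 2 ^ (a * 2 ^ j + 1) := by grw [hstep, ih]
        _ = 2 ^ (a * 2 ^ (j + 1) + 1) := by rw [← pow_add]; ring_nf
  intro n hn
  obtain ⟨j, hnj, hjn⟩ := exists_le_pow_le_mul one_lt_two hn
  calc f n ≤ f (2 ^ j) := hf hnj
    _ ≤ 2 ^ (a * 2 ^ j + 1) := hpow j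
    _ ≤ 2 ^ ((2 * a + 1) * n) := by
      apply Nat.pow_le_pow_right two_pos
      nlinarith

namespace PatternAvoidance
open Finset

variable {k : ℕ} {π : Equiv.Perm (Fin k)}

/-- Finite sets of points of `ℕ × ℕ` stand for 0-1 matrices of any size (the positions of their
ones), so that contraction can change the size. -/
def Contains (π : Equiv.Perm (Fin k)) (S : Finset (ℕ × ℕ)) : Prop :=
  ∃ x y : Fin k → ℕ, StrictMono x ∧ StrictMono y ∧ ∀ i, (x i, y (π i)) ∈ S

lemma Contains.image_swap {S : Finset (ℕ × ℕ)} (h : Contains π S) :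
    Contains π⁻¹ (S.image Prod.swap) := by
  obtain ⟨x, y, hx, hy, hS⟩ := h
  exact ⟨y, x, hy, hx, fun j => mem_image.2 ⟨_, hS (π⁻¹ j), by simp⟩⟩

lemma not_contains_image_swap {S : Finset (ℕ × ℕ)} (h : ¬ Contains π S) :
    ¬ Contains π⁻¹ (S.image Prod.swap) := fun h' => h (by simpa [image_image] using h'.image_swap)

/-- `S.image (blk B)` is the contraction of `S` by the factor `B`: one point for each nonempty
`B × B` block of `S`. -/
def blk (B : ℕ) (q : ℕ × ℕ) : ℕ × ℕ := (q.1 / B, q.2 / B)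

def block (B : ℕ) (p : ℕ × ℕ) : Finset (ℕ × ℕ) :=
  Ico (p.1 * B) (p.1 * B + B) ×ˢ Ico (p.2 * B) (p.2 * B + B)

variable {B : ℕ}

lemma div_eq_iff_mem_Ico (hB : 0 < B) {a I : ℕ} : a / B = I ↔ a ∈ Ico (I * B) (I * B + B) := by
  rw [Nat.div_eq_iff hB, mem_Ico]; omega

lemma mem_block_iff (hB : 0 < B) {p q : ℕ × ℕ} : q ∈ block B p ↔ blk B q = p := by
  rw [block, mem_product, ← div_eq_iff_mem_Ico hB, ← div_eq_iff_mem_Ico hB, blk, Prod.ext_iff]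

lemma card_block (B : ℕ) (p : ℕ × ℕ) : (block B p).card = B ^ 2 := by
  simp [block, sq]

lemma Contains.of_image_blk {S : Finset (ℕ × ℕ)} (h : Contains π (S.image (blk B))) :
    Contains π S := by
  obtain ⟨x, y, hx, hy, hS⟩ := h
  choose q hqS hq using fun i => mem_image.1 (hS i)
  have hrow : ∀ i, (q i).1 / B = x i := fun i => congrArg Prod.fst (hq i)
  have hcol : ∀ j, (q (π.symm j)).2 / B = y j := fun j => by
    simpa [blk] using congrArg Prod.snd (hq (π.symm j))
  refine ⟨fun i => (q i).1, fun j => (q (π.symm j)).2, fun i i' hii' => ?_, fun j j' hjj' => ?_,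
    fun i => by simpa using hqS i⟩
  · exact Nat.lt_of_div_lt_div (c := B) (by simpa only [hrow] using hx hii')
  · exact Nat.lt_of_div_lt_div (c := B) (by simpa only [hcol] using hy hjj')

def blockPts (B : ℕ) (S : Finset (ℕ × ℕ)) (p : ℕ × ℕ) : Finset (ℕ × ℕ) :=
  {q ∈ S | blk B q = p}

def blockRows (B : ℕ) (S : Finset (ℕ × ℕ)) (p : ℕ × ℕ) : Finset ℕ :=
  (blockPts B S p).image Prod.fst

def blockCols (B : ℕ) (S : Finset (ℕ × ℕ)) (p : ℕ × ℕ) : Finset ℕ :=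
  (blockPts B S p).image Prod.snd

lemma blockPts_subset_block (hB : 0 < B) (S : Finset (ℕ × ℕ)) (p : ℕ × ℕ) :
    blockPts B S p ⊆ block B p :=
  fun _ hq => (mem_block_iff hB).2 (mem_filter.1 hq).2

lemma blockCols_subset_Ico (hB : 0 < B) (S : Finset (ℕ × ℕ)) (p : ℕ × ℕ) :
    blockCols B S p ⊆ Ico (p.2 * B) (p.2 * B + B) := by
  intro c hc
  obtain ⟨q, hq, rfl⟩ := mem_image.1 hc
  exact (mem_product.1 (blockPts_subset_block hB S p hq)).2

lemma blockPts_subset_blockRows_product_blockCols (S : Finset (ℕ × ℕ)) (p : ℕ × ℕ) :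
    blockPts B S p ⊆ blockRows B S p ×ˢ blockCols B S p :=
  fun _ hq => mem_product.2 ⟨mem_image_of_mem _ hq, mem_image_of_mem _ hq⟩

lemma blockRows_eq_blockCols_image_swap (S : Finset (ℕ × ℕ)) (p : ℕ × ℕ) :
    blockRows B S p = blockCols B (S.image Prod.swap) p.swap := by
  ext a
  simp only [blockRows, blockCols, blockPts, mem_image, mem_filter, blk, Prod.ext_iff,
    Prod.fst_swap, Prod.snd_swap, Prod.exists]
  grind

lemma contains_of_subset_blockCols {S : Finset (ℕ × ℕ)} {J : ℕ} {F R : Finset ℕ}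
    (hF : F.card = k) (hR : R.card = k) (hRF : ∀ I ∈ R, F ⊆ blockCols B S (I, J)) :
    Contains π S := by
  set e := R.orderEmbOfFin hR
  set c := F.orderEmbOfFin hF
  have hpt : ∀ i, ∃ a, (a, c (π i)) ∈ S ∧ a / B = e i := by
    intro i
    obtain ⟨q, hq, hqc⟩ := mem_image.1
      (hRF _ (R.orderEmbOfFin_mem hR i) (F.orderEmbOfFin_mem hF (π i)))
    obtain ⟨hqS, hqblk⟩ := mem_filter.1 hq
    exact ⟨q.1, by rwa [← hqc], congrArg Prod.fst hqblk⟩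
  choose x hxS hxe using hpt
  refine ⟨x, c, fun i i' hii' => Nat.lt_of_div_lt_div (c := B) ?_, c.strictMono, hxS⟩
  rw [hxe, hxe]
  exact e.strictMono hii'

lemma card_filter_subset_blockCols_lt {S : Finset (ℕ × ℕ)} (hS : ¬ Contains π S) {J : ℕ}
    {F : Finset ℕ} (hF : F.card = k) (R : Finset ℕ) :
    {I ∈ R | F ⊆ blockCols B S (I, J)}.card < k := by
  by_contra! hR
  obtain ⟨R', hR'sub, hR'⟩ := exists_subset_card_eq hR
  exact hS (contains_of_subset_blockCols hF hR' fun I hI => (mem_filter.1 (hR'sub hI)).2)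

lemma card_wide_blocks_in_column_le (hB : 0 < B) {S : Finset (ℕ × ℕ)} (hS : ¬ Contains π S)
    (n J : ℕ) : {I ∈ range n | k ≤ (blockCols B S (I, J)).card}.card ≤ B.choose k * (k - 1) := by
  calc _ ≤ ((powersetCard k (Ico (J * B) (J * B + B))).biUnion
        fun F => {I ∈ range n | F ⊆ blockCols B S (I, J)}).card := by
        refine card_le_card fun I hI => ?_
        obtain ⟨hIn, hIk⟩ := mem_filter.1 hI
        obtain ⟨F, hFsub, hF⟩ := exists_subset_card_eq hIk
        exact mem_biUnion.2 ⟨F, mem_powersetCard.2 ⟨hFsub.trans (blockCols_subset_Ico hB S _), hF⟩,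
          mem_filter.2 ⟨hIn, hFsub⟩⟩
    _ ≤ (powersetCard k (Ico (J * B) (J * B + B))).card * (k - 1) :=
        card_biUnion_le_card_mul _ _ _ fun F hF =>
          Nat.le_sub_one_of_lt (card_filter_subset_blockCols_lt hS (mem_powersetCard.1 hF).2 _)
    _ = B.choose k * (k - 1) := by simp

lemma card_wide_blocks_le (hB : 0 < B) {S : Finset (ℕ × ℕ)} (hS : ¬ Contains π S) (n : ℕ) :
    {p ∈ range n ×ˢ range n | k ≤ (blockCols B S p).card}.card ≤ n * (B.choose k * (k - 1)) := by
  calc _ ≤ ((range n).biUnion fun J : ℕ =>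
        {I ∈ range n | k ≤ (blockCols B S (I, J)).card}.image fun I => ((I, J) : ℕ × ℕ)).card := by
        refine card_le_card fun p hp => ?_
        obtain ⟨hpn, hpk⟩ := mem_filter.1 hp
        obtain ⟨hI, hJ⟩ := mem_product.1 hpn
        exact mem_biUnion.2 ⟨p.2, hJ, mem_image.2 ⟨p.1, mem_filter.2 ⟨hI, hpk⟩, rfl⟩⟩
    _ ≤ (range n).card * (B.choose k * (k - 1)) :=
        card_biUnion_le_card_mul _ _ _ fun J _ =>
          card_image_le.trans (card_wide_blocks_in_column_le hB hS n J)
    _ = n * (B.choose k * (k - 1)) := by rw [card_range]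

lemma card_tall_blocks_le (hB : 0 < B) {S : Finset (ℕ × ℕ)} (hS : ¬ Contains π S) (n : ℕ) :
    {p ∈ range n ×ˢ range n | k ≤ (blockRows B S p).card}.card ≤ n * (B.choose k * (k - 1)) := by
  refine le_trans (card_le_card_of_injOn Prod.swap (fun p hp => ?_) Prod.swap_injective.injOn)
    (card_wide_blocks_le hB (not_contains_image_swap hS) n)
  obtain ⟨hpn, hpk⟩ := mem_filter.1 hp
  rw [coe_filter, Set.mem_ofPred_eq, mem_product, Prod.fst_swap, Prod.snd_swap,
    ← blockRows_eq_blockCols_image_swap]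
  exact ⟨(mem_product.1 hpn).symm, hpk⟩

open scoped Classical in
noncomputable def av (π : Equiv.Perm (Fin k)) (n : ℕ) : Finset (Finset (ℕ × ℕ)) :=
  {S ∈ (range n ×ˢ range n).powerset | ¬ Contains π S}

lemma mem_av {n : ℕ} {S : Finset (ℕ × ℕ)} :
    S ∈ av π n ↔ S ⊆ range n ×ˢ range n ∧ ¬ Contains π S := by
  simp [av]

lemma av_mono : Monotone (av π) := fun _ _ h S hS => by
  rw [mem_av] at hS ⊢
  exact ⟨hS.1.trans (product_subset_product (range_mono h) (range_mono h)), hS.2⟩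

lemma image_blk_mem_av {n : ℕ} {S : Finset (ℕ × ℕ)} (hS : S ∈ av π (B * n)) :
    S.image (blk B) ∈ av π n := by
  rw [mem_av] at hS ⊢
  refine ⟨fun p hp => ?_, fun h => hS.2 h.of_image_blk⟩
  obtain ⟨q, hq, rfl⟩ := mem_image.1 hp
  obtain ⟨h1, h2⟩ := mem_product.1 (hS.1 hq)
  simp only [mem_range, blk, mem_product] at h1 h2 ⊢
  exact ⟨Nat.div_lt_of_lt_mul h1, Nat.div_lt_of_lt_mul h2⟩

noncomputable def ex (π : Equiv.Perm (Fin k)) (n : ℕ) : ℕ := (av π n).sup card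

lemma card_le_ex {n : ℕ} {S : Finset (ℕ × ℕ)} (hS : S ∈ av π n) : S.card ≤ ex π n :=
  le_sup (f := card) hS

lemma ex_mono : Monotone (ex π) := fun _ _ h => sup_mono (av_mono h)

lemma ex_one_le : ex π 1 ≤ 1 :=
  Finset.sup_le fun S hS => by simpa using card_le_card (mem_av.1 hS).1

lemma card_blockPts_le_sq (hB : 0 < B) (S : Finset (ℕ × ℕ)) (p : ℕ × ℕ) :
    (blockPts B S p).card ≤ B ^ 2 :=
  (card_le_card (blockPts_subset_block hB S p)).trans (card_block B p).le

lemma card_blockPts_le_of_lt {S : Finset (ℕ × ℕ)} {p : ℕ × ℕ} (hrows : (blockRows B S p).card < k)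
    (hcols : (blockCols B S p).card < k) : (blockPts B S p).card ≤ (k - 1) ^ 2 :=
  calc (blockPts B S p).card ≤ (blockRows B S p).card * (blockCols B S p).card := by
        simpa using card_le_card (blockPts_subset_blockRows_product_blockCols S p)
    _ ≤ (k - 1) ^ 2 := by rw [sq]; exact Nat.mul_le_mul (by omega) (by omega)

lemma ex_mul_le (hB : 0 < B) (n : ℕ) :
    ex π (B * n) ≤ (k - 1) ^ 2 * ex π n + B ^ 2 * (2 * n * (B.choose k * (k - 1))) := by
  refine Finset.sup_le fun S hS => ?_
  set T := S.image (blk B)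
  have hT := image_blk_mem_av hS
  have hSav := (mem_av.1 hS).2
  let Heavy : ℕ × ℕ → Prop := fun p => k ≤ (blockRows B S p).card ∨ k ≤ (blockCols B S p).card
  have hlight : ∑ p ∈ T with ¬ Heavy p, (blockPts B S p).card ≤ (k - 1) ^ 2 * ex π n :=
    calc _ ≤ ∑ _p ∈ T, (k - 1) ^ 2 :=
          (sum_le_sum fun p hp => by
            obtain ⟨hrows, hcols⟩ := not_or.1 (mem_filter.1 hp).2
            exact card_blockPts_le_of_lt (not_le.1 hrows) (not_le.1 hcols)).trans
            (sum_le_sum_of_subset (filter_subset _ _))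
      _ ≤ (k - 1) ^ 2 * ex π n := by
          rw [sum_const, smul_eq_mul, mul_comm]; exact Nat.mul_le_mul_left _ (card_le_ex hT)
  have hheavy : ∑ p ∈ T with Heavy p, (blockPts B S p).card ≤
      B ^ 2 * (2 * n * (B.choose k * (k - 1))) :=
    calc _ ≤ {p ∈ T | Heavy p}.card * B ^ 2 := sum_le_card_nsmul _ _ _ fun p _ =>
          card_blockPts_le_sq hB S p
      _ ≤ ({p ∈ range n ×ˢ range n | k ≤ (blockRows B S p).card} ∪
            {p ∈ range n ×ˢ range n | k ≤ (blockCols B S p).card}).card * B ^ 2 := by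
          rw [← filter_or]
          exact Nat.mul_le_mul_right _ (card_le_card (filter_subset_filter _ (mem_av.1 hT).1))
      _ ≤ B ^ 2 * (2 * n * (B.choose k * (k - 1))) := by
          grw [card_union_le, card_tall_blocks_le hB hSav, card_wide_blocks_le hB hSav]
          exact le_of_eq (by ring)
  calc S.card = ∑ p ∈ T, (blockPts B S p).card :=
        card_eq_sum_card_fiberwise fun q hq => mem_image_of_mem _ hq
    _ ≤ _ := by rw [← sum_filter_not_add_sum_filter _ Heavy]; exact Nat.add_le_add hlight hheavy

theorem ex_le_mul (hk : 1 < k) (π : Equiv.Perm (Fin k)) : ∃ c, ∀ n, 0 < n → ex π n ≤ c * n := by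
  set B := k ^ 2
  have hB : 1 < B := Nat.one_lt_pow two_ne_zero hk
  set D := B ^ 2 * (2 * (B.choose k * (k - 1))) + 1
  refine ⟨D * B, le_mul_of_le_pred_mul_add hB ex_mono (ex_one_le.trans (by omega)) fun n => ?_⟩
  have hsq : (k - 1) ^ 2 ≤ B - 1 := by
    have : (k - 1) ^ 2 < k ^ 2 := Nat.pow_lt_pow_left (by omega) two_ne_zero
    omega
  calc ex π (B * n) ≤ (k - 1) ^ 2 * ex π n + B ^ 2 * (2 * n * (B.choose k * (k - 1))) :=
        ex_mul_le (by omega) n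
    _ = (k - 1) ^ 2 * ex π n + (D - 1) * n := by rw [Nat.add_sub_cancel]; ring
    _ ≤ (B - 1) * ex π n + D * n := by gcongr; exact Nat.sub_le D 1

lemma subset_biUnion_block_of_image_blk_eq (hB : 0 < B) {S T : Finset (ℕ × ℕ)}
    (hST : S.image (blk B) = T) : S ⊆ T.biUnion (block B) :=
  fun q hq => mem_biUnion.2 ⟨blk B q, hST ▸ mem_image_of_mem _ hq, (mem_block_iff hB).2 rfl⟩

lemma card_filter_image_blk_eq_le (hB : 0 < B) (𝒮 : Finset (Finset (ℕ × ℕ)))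
    (T : Finset (ℕ × ℕ)) : {S ∈ 𝒮 | S.image (blk B) = T}.card ≤ 2 ^ (B ^ 2 * T.card) :=
  calc _ ≤ (T.biUnion (block B)).powerset.card := card_le_card fun S hS =>
        mem_powerset.2 (subset_biUnion_block_of_image_blk_eq hB (mem_filter.1 hS).2)
    _ ≤ 2 ^ (B ^ 2 * T.card) := by
        rw [card_powerset, mul_comm]
        exact Nat.pow_le_pow_right two_pos
          (card_biUnion_le_card_mul _ _ _ fun p _ => (card_block B p).le)

lemma card_av_two_mul_le (n : ℕ) : (av π (2 * n)).card ≤ 2 ^ (4 * ex π n) * (av π n).card :=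
  calc (av π (2 * n)).card = ∑ T ∈ av π n, {S ∈ av π (2 * n) | S.image (blk 2) = T}.card :=
        card_eq_sum_card_fiberwise fun _ hS => image_blk_mem_av hS
    _ ≤ ∑ _T ∈ av π n, 2 ^ (4 * ex π n) := sum_le_sum fun T hT =>
        (card_filter_image_blk_eq_le two_pos _ T).trans
          (Nat.pow_le_pow_right two_pos (Nat.mul_le_mul_left 4 (card_le_ex hT)))
    _ = 2 ^ (4 * ex π n) * (av π n).card := by rw [sum_const, smul_eq_mul, mul_comm]

lemma card_av_one_le : (av π 1).card ≤ 2 :=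
  calc (av π 1).card ≤ (range 1 ×ˢ range 1).powerset.card :=
        card_le_card fun _ hS => mem_powerset.2 (mem_av.1 hS).1
    _ = 2 := by simp

theorem card_av_le_two_pow (hk : 1 < k) (π : Equiv.Perm (Fin k)) :
    ∃ a, ∀ n, 0 < n → (av π n).card ≤ 2 ^ (a * n) := by
  obtain ⟨c, hc⟩ := ex_le_mul hk π
  refine ⟨2 * (4 * c) + 1, le_two_pow_of_le_two_pow_mul (fun _ _ h => card_le_card (av_mono h))
    card_av_one_le fun n => ?_⟩
  rcases n.eq_zero_or_pos with rfl | hn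
  · simp
  calc (av π (2 * n)).card ≤ 2 ^ (4 * ex π n) * (av π n).card := card_av_two_mul_le n
    _ ≤ 2 ^ (4 * c * n) * (av π n).card := by
        rw [mul_assoc 4]
        exact Nat.mul_le_mul_right _
          (Nat.pow_le_pow_right two_pos (Nat.mul_le_mul_left 4 (hc n hn)))

def oneEntries {n : ℕ} (M : Fin n → Fin n → Bool) : Finset (ℕ × ℕ) :=
  ({p | M p.1 p.2 = true} : Finset (Fin n × Fin n)).map (Fin.valEmbedding.prodMap Fin.valEmbedding)

lemma mem_oneEntries_iff {n : ℕ} {M : Fin n → Fin n → Bool} {a b : ℕ} :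
    (a, b) ∈ oneEntries M ↔ ∃ (ha : a < n) (hb : b < n), M ⟨a, ha⟩ ⟨b, hb⟩ = true := by
  simp only [oneEntries, mem_map, mem_filter, mem_univ, true_and, Prod.exists,
    Function.Embedding.prodMap, Function.Embedding.coeFn_mk, Prod.map_apply,
    Fin.valEmbedding_apply, Prod.mk.injEq]
  constructor
  · rintro ⟨i, j, hij, rfl, rfl⟩
    exact ⟨i.2, j.2, hij⟩
  · rintro ⟨ha, hb, h⟩
    exact ⟨_, _, h, rfl, rfl⟩

lemma oneEntries_injective {n : ℕ} : Function.Injective (oneEntries (n := n)) := by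
  intro M M' h
  funext i j
  have hM := mem_oneEntries_iff (M := M) (a := i) (b := j)
  rw [h, mem_oneEntries_iff] at hM
  simpa using hM.symm

lemma Contains.matCopies_pos {n : ℕ} {M : Fin n → Fin n → Bool}
    (h : Contains π (oneEntries M)) : 0 < matCopies π M := by
  obtain ⟨x, y, hx, hy, hM⟩ := h
  choose hxn hyn hxy using fun i => mem_oneEntries_iff.1 (hM i)
  have hyn' : ∀ j, y j < n := fun j => by simpa using hyn (π.symm j)
  have : Nonempty {xy : (Fin k → Fin n) × (Fin k → Fin n) //
      StrictMono xy.1 ∧ StrictMono xy.2 ∧ ∀ i, M (xy.1 i) (xy.2 (π i)) = true} :=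
    ⟨⟨(fun i => ⟨x i, hxn i⟩, fun j => ⟨y j, hyn' j⟩), fun _ _ h => hx h, fun _ _ h => hy h, hxy⟩⟩
  exact Nat.card_pos

lemma oneEntries_mem_av {n : ℕ} {M : Fin n → Fin n → Bool} (hM : matCopies π M = 0) :
    oneEntries M ∈ av π n := by
  refine mem_av.2 ⟨fun ⟨a, b⟩ hab => ?_, fun h => h.matCopies_pos.ne' hM⟩
  obtain ⟨ha, hb, -⟩ := mem_oneEntries_iff.1 hab
  exact mem_product.2 ⟨mem_range.2 ha, mem_range.2 hb⟩

lemma card_avoiding_le_card_av (π : Equiv.Perm (Fin k)) (n : ℕ) :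
    Nat.card {M : Fin n → Fin n → Bool // matCopies π M = 0} ≤ (av π n).card :=
  calc _ ≤ Nat.card (av π n) :=
        Nat.card_le_card_of_injective (fun M => ⟨oneEntries M.1, oneEntries_mem_av M.2⟩)
          fun _ _ h => Subtype.ext (oneEntries_injective (congrArg Subtype.val h))
    _ = (av π n).card := Nat.card_eq_finsetCard _

end PatternAvoidance

/-- The number of `n × n` 0-1 matrices avoiding the permutation matrix `A_π`
(containing no copy of it) is at most `exp(Cn)`. -/
theorem count_avoiding_matrices (k : ℕ) (hk : 1 < k) (π : Equiv.Perm (Fin k)) :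
    ∃ C : ℝ, ∀ n : ℕ, 0 < n →
      (Nat.card {M : Fin n → Fin n → Bool // matCopies π M = 0} : ℝ) ≤
        Real.exp (C * n) := by
  obtain ⟨a, ha⟩ := PatternAvoidance.card_av_le_two_pow hk π
  refine ⟨a * Real.log 2, fun n hn => ?_⟩
  calc (Nat.card {M : Fin n → Fin n → Bool // matCopies π M = 0} : ℝ)
      ≤ ((2 ^ (a * n) : ℕ) : ℝ) := by
        exact_mod_cast (PatternAvoidance.card_avoiding_le_card_av π n).trans (ha n hn)
    _ = Real.exp (a * Real.log 2 * n) := by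
        rw [show a * Real.log 2 * n = ((a * n : ℕ) : ℝ) * Real.log 2 by push_cast; ring,
          Real.exp_nat_mul, Real.exp_log two_pos]
        norm_cast
end
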